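/- arXiv:0903.1426 — 5 statements merged into one kernel-verified Lean document; each statement's English description precedes it below -/
import Mathlib

section
/- Let (X,d) be a compact metric space and T : X → X a homeomorphism which is expansive, i.e. there exists ε > 0 such that for all x ≠ y in X there is n ∈ ℤ with d(T^n x, T^n y) > ε. Then for every x ∈ X the homoclinic class 𝔗(x) = {y ∈ X : lim_{|n|→∞} d(T^n x, T^n y) = 0} is at most countable. -/
/-!
Let `ε` be an expansivity constant. A point `y` of the homoclinic class of `x` stays `ε/2`-close
to the orbit of `x` outside a finite set `s` of times, and two such points `y ≠ z` must then be
`ε`-apart at some time in `s`. By uniform continuity of the finitely many `Tⁿ`, `n ∈ s`, this keeps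
them uniformly apart, and a uniformly separated subset of a compact space is finite. The class is
thus a union of finite sets indexed by the countably many finite `s ⊆ ℤ`.
-/

open Filter Topology Uniformity

theorem finite_of_spaced_out {X : Type*} [UniformSpace X] [CompactSpace X] [T0Space X]
    {V : Set (X × X)} (hV : V ∈ 𝓤 X) {s : Set X} (hs : s.Pairwise fun x y => (x, y) ∉ V) :
    s.Finite := by
  have hdiscrete : IsDiscrete s := isDiscrete_iff_nhdsNE.2 fun x hx => by
    refine inf_principal_eq_bot.2 ?_
    filter_upwards [self_mem_nhdsWithin, nhdsWithin_le_nhds (UniformSpace.ball_mem_nhds x hV)]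
      with y hyx hy hys
    exact hs hx hys (Ne.symm hyx) hy
  exact (isClosed_of_spaced_out hV hs).isCompact.finite hdiscrete

theorem Homeomorph.toEquiv_zpow {X : Type*} [TopologicalSpace X] (T : X ≃ₜ X) (n : ℤ) :
    (T ^ n).toEquiv = T.toEquiv ^ n :=
  map_zpow (MonoidHom.mk' Homeomorph.toEquiv fun _ _ => rfl) T n

theorem Homeomorph.continuous_toEquiv_zpow {X : Type*} [TopologicalSpace X] (T : X ≃ₜ X)
    (n : ℤ) : Continuous (T.toEquiv ^ n) := by
  rw [← T.toEquiv_zpow]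
  exact (T ^ n).continuous

section SeparatingFamily

variable {ι X Y : Type*} [UniformSpace X] [CompactSpace X] [PseudoMetricSpace Y]
  {f : ι → X → Y} {ε : ℝ}

theorem setOf_forall_mem_dist_lt_mem_uniformity (hf : ∀ i, Continuous (f i)) (hε : 0 < ε)
    (s : Finset ι) : {p : X × X | ∀ i ∈ s, dist (f i p.1) (f i p.2) < ε} ∈ 𝓤 X :=
  (eventually_all_finset s).2 fun i _ =>
    CompactSpace.uniformContinuous_of_continuous (hf i) (Metric.dist_mem_uniformity hε)

theorem finite_setOf_forall_notMem_dist_le [T0Space X] (hf : ∀ i, Continuous (f i))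
    (hε : 0 < ε) (hsep : ∀ y z, y ≠ z → ∃ i, ε < dist (f i y) (f i z)) (s : Finset ι) (x : X) :
    {y | ∀ i ∉ s, dist (f i x) (f i y) ≤ ε / 2}.Finite := by
  refine finite_of_spaced_out (setOf_forall_mem_dist_lt_mem_uniformity hf hε s)
    fun y hy z hz hne hyz => ?_
  obtain ⟨i, hi⟩ := hsep y z hne
  refine hi.not_ge ?_
  by_cases his : i ∈ s
  · exact (hyz i his).le
  · calc dist (f i y) (f i z) ≤ dist (f i x) (f i y) + dist (f i x) (f i z) :=
          dist_triangle_left _ _ _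
      _ ≤ ε / 2 + ε / 2 := add_le_add (hy i his) (hz i his)
      _ = ε := add_halves ε

theorem countable_setOf_tendsto_dist_cofinite [Countable ι] [T0Space X]
    (hf : ∀ i, Continuous (f i)) (hε : 0 < ε)
    (hsep : ∀ y z, y ≠ z → ∃ i, ε < dist (f i y) (f i z)) (x : X) :
    {y | Tendsto (fun i => dist (f i x) (f i y)) cofinite (𝓝 0)}.Countable := by
  refine (Set.countable_iUnion fun s : Finset ι =>
    (finite_setOf_forall_notMem_dist_le hf hε hsep s x).countable).mono fun y hy => ?_
  have hfar : {i | ¬dist (f i x) (f i y) ≤ ε / 2}.Finite :=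
    eventually_cofinite.1 (hy.eventually (ge_mem_nhds (half_pos hε)))
  exact Set.mem_iUnion.2 ⟨hfar.toFinset, fun i hi => not_not.1 (mt hfar.mem_toFinset.2 hi)⟩

end SeparatingFamily

theorem homoclinic_class_countable_of_expansive
    {X : Type*} [MetricSpace X] [CompactSpace X] (T : X ≃ₜ X)
    (hexp : ∃ ε > (0 : ℝ), ∀ x y : X, x ≠ y →
      ∃ n : ℤ, ε < dist ((T.toEquiv ^ n) x) ((T.toEquiv ^ n) y))
    (x : X) :
    Set.Countable {y : X |
      Filter.Tendsto (fun n : ℤ => dist ((T.toEquiv ^ n) x) ((T.toEquiv ^ n) y))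
        Filter.cofinite (nhds 0)} := by
  obtain ⟨ε, hε, hsep⟩ := hexp
  exact countable_setOf_tendsto_dist_cofinite (f := fun n : ℤ => ⇑(T.toEquiv ^ n))
    T.continuous_toEquiv_zpow hε hsep x
end

section
/- Let X ⊆ Σ^{ℤ^d} be a subshift. Then the group F(X) is generated by the admissible involutions ξ_{a,b}: every φ ∈ F(X) is a finite composition of maps ξ_{a,b} with a,b ∈ Σ^{B_n} for some n such that ξ_{a,b} maps X into X, where ξ_{a,b}(x) replaces the pattern a on B_n by b if x|_{B_n} = a, replaces b by a if x|_{B_n} = b, and fixes all other points and coordinates. -/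
/-!
STATEMENT 1: For a subshift `X ⊆ Σ^{ℤ^d}`, the group `F(X)` of uniformly
finite-dimensional homeomorphisms is generated by the admissible swap involutions `ξ_{a,b}`:
every `φ ∈ F(X)` is a finite composition of maps `ξ_{a,b}` (with `a, b` patterns on a
ball `B_n`) that map `X` into `X`.
-/

open MeasureTheory Filter Real

attribute [local instance] Classical.propDecidable

namespace PaperStmt

/-- Configurations over the lattice `ℤ^d` with alphabet `A`. -/
abbrev Cfg (d : ℕ) (A : Type*) := (Fin d → ℤ) → A

/-- The sup-norm `‖k‖ = max_i |k_i|` of a lattice point. -/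
def znorm {d : ℕ} (k : Fin d → ℤ) : ℕ := Finset.univ.sup fun i => (k i).natAbs

/-- The shift action: `(shift n x) k = x (k + n)`. -/
def shift {d : ℕ} {A : Type*} (n : Fin d → ℤ) (x : Cfg d A) : Cfg d A := fun k => x (k + n)

variable {d : ℕ} {A : Type*}

/-- A subshift: a nonempty, closed, shift-invariant set of configurations. -/
def IsSubshift [TopologicalSpace A] (X : Set (Cfg d A)) : Prop :=
  X.Nonempty ∧ IsClosed X ∧ ∀ (n : Fin d → ℤ), ∀ x ∈ X, shift n x ∈ X

/-- The swap involution `ξ_{a,b}`: on the ball `B_n = {k : ‖k‖ ≤ n}`, it replaces the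
pattern of `a` by that of `b` and vice versa, fixing all other points and all
coordinates outside `B_n`. -/
noncomputable def xi (n : ℕ) (a b : Cfg d A) (x : Cfg d A) : Cfg d A := fun k =>
  if znorm k ≤ n then
    if ∀ j : Fin d → ℤ, znorm j ≤ n → x j = a j then b k
    else if ∀ j : Fin d → ℤ, znorm j ≤ n → x j = b j then a k
    else x k
  else x k

/-- An admissible swap for `X`: a map of the form `ξ_{a,b}` sending `X` into `X`. -/
def IsAdmissibleSwap (X : Set (Cfg d A)) (g : Cfg d A → Cfg d A) : Prop :=
  ∃ (n : ℕ) (a b : Cfg d A), g = xi n a b ∧ ∀ x ∈ X, g x ∈ X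

/-!
A continuous map on the compact set `X` into the discrete space of patterns on `B_N` only sees
finitely many coordinates, so the `B_N`-pattern of `φ x` is determined by the `B_m`-pattern of `x`
for some `m ≥ N`. As `φ` fixes the coordinates outside `B_N`, it acts on `X` by replacing the
`B_m`-pattern `p` of `x` by `σ p`, for a permutation `σ` of the finite set of `B_m`-patterns.
The transposition of `p` and `σ p` preserves `X`, since it acts as `φ` on points with pattern `p`
and as `φ⁻¹` on points with pattern `σ p`; and a permutation of a finite set is a product of
transpositions within its orbits. Finally, sending a permutation `τ` of patterns to the map that
replaces the `B_m`-pattern `p` of a configuration by `τ p` is a monoid homomorphism, and it sends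
the transposition of the `B_m`-patterns of `a` and `b` to `ξ_{a,b}`.
-/

open Equiv Function Set Topology

theorem finite_setOf_znorm_le (m : ℕ) : {k : Fin d → ℤ | znorm k ≤ m}.Finite := by
  refine (Set.Finite.pi fun _ : Fin d => Set.finite_Icc (-(m : ℤ)) m).subset fun k hk i _ => ?_
  have hki : (k i).natAbs ≤ m :=
    (Finset.le_sup (f := fun i => (k i).natAbs) (Finset.mem_univ i)).trans hk
  exact ⟨by omega, by omega⟩

instance (m : ℕ) : Finite {k : Fin d → ℤ // znorm k ≤ m} :=
  (finite_setOf_znorm_le m).to_subtype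

abbrev Pattern (d m : ℕ) (A : Type*) := {k : Fin d → ℤ // znorm k ≤ m} → A

def restrictBall (m : ℕ) (x : Cfg d A) : Pattern d m A := fun k => x k

def patch (m : ℕ) (x : Cfg d A) (p : Pattern d m A) : Cfg d A := fun k =>
  if h : znorm k ≤ m then p ⟨k, h⟩ else x k

section Patch

variable {m : ℕ}

@[simp]
theorem restrictBall_patch (x : Cfg d A) (p : Pattern d m A) : restrictBall m (patch m x p) = p :=
  funext fun k => by simp [restrictBall, patch, k.2]

@[simp]
theorem patch_patch (x : Cfg d A) (p q : Pattern d m A) : patch m (patch m x p) q = patch m x q :=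
  funext fun k => by by_cases h : znorm k ≤ m <;> simp [patch, h]

theorem patch_restrictBall_of_eq_of_lt {x y : Cfg d A} (h : ∀ k, m < znorm k → x k = y k) :
    patch m x (restrictBall m y) = y :=
  funext fun k => by
    by_cases hk : znorm k ≤ m
    · simp [patch, restrictBall, hk]
    · simp [patch, hk, h k (not_le.1 hk)]

@[simp]
theorem patch_restrictBall (x : Cfg d A) : patch m x (restrictBall m x) = x :=
  patch_restrictBall_of_eq_of_lt fun _ _ => rfl

theorem restrictBall_surjective : Surjective (restrictBall (d := d) (A := A) m) := fun p =>
  ⟨patch m (fun _ => p ⟨0, by simp [znorm]⟩) p, restrictBall_patch _ p⟩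

theorem restrictBall_eq_of_le {m' : ℕ} (hm : m ≤ m') {x y : Cfg d A}
    (h : restrictBall m' x = restrictBall m' y) : restrictBall m x = restrictBall m y :=
  funext fun k => congrFun h ⟨k, k.2.trans hm⟩

theorem restrictBall_eq_iff {x y : Cfg d A} :
    restrictBall m x = restrictBall m y ↔ ∀ k, znorm k ≤ m → x k = y k :=
  ⟨fun h k hk => congrFun h ⟨k, hk⟩, fun h => funext fun k => h k k.2⟩

variable (m) in
def patchPerm : Perm (Pattern d m A) →* Function.End (Cfg d A) where
  toFun σ x := patch m x (σ (restrictBall m x))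
  map_one' := funext fun x => patch_restrictBall x
  map_mul' σ τ := funext fun x =>
    show _ = patch m (patch m x (τ (restrictBall m x))) (σ (restrictBall m (patch m x _))) by simp

theorem patchPerm_apply (σ : Perm (Pattern d m A)) (x : Cfg d A) :
    patchPerm m σ x = patch m x (σ (restrictBall m x)) := rfl

theorem xi_eq_patchPerm_swap (a b : Cfg d A) :
    xi m a b = patchPerm m (swap (restrictBall m a) (restrictBall m b)) := by
  funext x k
  simp only [xi, ← restrictBall_eq_iff, patchPerm_apply, patch, swap_apply_def]
  by_cases hk : znorm k ≤ m
  · split_ifs <;> simp_all [restrictBall]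
  · simp [hk]

end Patch

theorem perm_mem_closure_swap_of_rel {α : Type*} [Finite α] {R : α → α → Prop} {σ : Perm α}
    (hσ : ∀ a, R a (σ a)) : σ ∈ Submonoid.closure {τ | ∃ a b, R a b ∧ τ = swap a b} := by
  classical
  set S : Set (Perm α) := {τ | ∃ a b, a ≠ b ∧ R a b ∧ τ = swap a b}
  have hS : ∀ τ ∈ S, τ.IsSwap := fun _ ⟨a, b, hab, _, hτ⟩ => ⟨a, b, hab, hτ⟩
  have hσS : σ ∈ Subgroup.closure S := by
    refine (mem_closure_isSwap hS).2 ⟨Set.toFinite _, fun a => ?_⟩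
    by_cases ha : σ a = a
    · rw [ha]; exact MulAction.mem_orbit_self a
    · exact ⟨⟨swap a (σ a), Subgroup.subset_closure ⟨a, σ a, Ne.symm ha, hσ a, rfl⟩⟩,
        swap_apply_left a (σ a)⟩
  have hS_inv : S⁻¹ ⊆ S := fun τ hτ => by
    obtain ⟨a, b, hab, hR, hτ⟩ := Set.mem_inv.1 hτ
    exact ⟨a, b, hab, hR, by rw [← inv_inv τ, hτ, swap_inv]⟩
  rw [← Subgroup.mem_toSubmonoid, Subgroup.closure_toSubmonoid, Set.union_eq_left.2 hS_inv] at hσS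
  refine Submonoid.closure_mono ?_ hσS
  rintro τ ⟨a, b, -, hR, hτ⟩
  exact ⟨a, b, hR, hτ⟩

theorem exists_perm_apply_eq {α β : Type*} [Finite β] (r : α → β) (e : α ≃ α)
    (he : ∀ x y, r x = r y → r (e x) = r (e y)) : ∃ σ : Perm β, ∀ x, σ (r x) = r (e x) := by
  set τ : β → β := extend r (r ∘ e) id
  have hτ : ∀ x, τ (r x) = r (e x) := FactorsThrough.extend_apply he id
  have hsurj : Surjective τ := by
    intro b
    by_cases hb : ∃ x, r x = b
    · obtain ⟨x, rfl⟩ := hb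
      exact ⟨r (e.symm x), by rw [hτ, e.apply_symm_apply]⟩
    · exact ⟨b, extend_apply' _ _ b hb⟩
  exact ⟨Equiv.ofBijective τ hsurj.bijective_of_finite, hτ⟩

section Topology

variable [TopologicalSpace A]

theorem continuous_restrictBall (m : ℕ) : Continuous (restrictBall m : Cfg d A → Pattern d m A) :=
  continuous_pi fun k => continuous_apply k.1

theorem exists_restrictBall_eq_subset_of_mem_nhds {x : Cfg d A} {V : Set (Cfg d A)}
    (hV : V ∈ 𝓝 x) : ∃ m, {y | restrictBall m y = restrictBall m x} ⊆ V := by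
  rw [nhds_pi, Filter.mem_pi] at hV
  obtain ⟨I, hI, t, ht, hIt⟩ := hV
  obtain ⟨m, hm⟩ := (hI.image znorm).bddAbove
  refine ⟨m, fun y hy => hIt fun i hi => ?_⟩
  rw [restrictBall_eq_iff.1 hy i (hm (mem_image_of_mem znorm hi))]
  exact mem_of_mem_nhds (ht i)

variable [DiscreteTopology A]

theorem exists_restrictBall_eq_of_isLocallyConstant {X : Set (Cfg d A)}
    (hX : IsCompact X) {β : Type*} {g : X → β} (hg : IsLocallyConstant g) :
    ∃ m, ∀ x y : X, restrictBall m x.1 = restrictBall m y.1 → g x = g y := by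
  set U : ℕ → Set (Cfg d A) := fun m => restrictBall m ⁻¹'
    {p | ∀ x y : X, restrictBall m x.1 = p → restrictBall m y.1 = p → g x = g y}
  have hU_open m : IsOpen (U m) := (isOpen_discrete _).preimage (continuous_restrictBall m)
  have hU_mono : Monotone U := fun m m' hm z hz x y hx hy =>
    hz x y (restrictBall_eq_of_le hm hx) (restrictBall_eq_of_le hm hy)
  have hX_sub : X ⊆ ⋃ m, U m := by
    intro x hx
    obtain ⟨V, hV, hV_sub⟩ := (mem_nhds_subtype X ⟨x, hx⟩ _).1
      ((hg.isOpen_fiber (g ⟨x, hx⟩)).mem_nhds rfl)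
    obtain ⟨m, hm⟩ := exists_restrictBall_eq_subset_of_mem_nhds hV
    exact mem_iUnion.2 ⟨m, fun y z hy hz =>
      (hV_sub (hm hy) : g y = _).trans (hV_sub (hm hz) : g z = _).symm⟩
  obtain ⟨m, hm⟩ := hX.elim_directed_cover U hU_open hX_sub hU_mono.directed_le
  exact ⟨m, fun x y hxy => hm x.2 x y rfl hxy.symm⟩

theorem exists_perm_patchPerm_eq [Finite A] {X : Set (Cfg d A)} (hX : IsClosed X)
    (φ : X ≃ₜ X) {N : ℕ} (hφ : ∀ (x : X) k, N < znorm k → (φ x).1 k = x.1 k) :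
    ∃ m, ∃ σ : Perm (Pattern d m A), ∀ x : X, (φ x).1 = patchPerm m σ x.1 := by
  obtain ⟨m₀, hm₀⟩ := exists_restrictBall_eq_of_isLocallyConstant hX.isCompact
    (g := fun x => restrictBall N (φ x).1) <| (IsLocallyConstant.iff_continuous _).2 <|
      (continuous_restrictBall N).comp (continuous_subtype_val.comp φ.continuous)
  set m := max m₀ N
  have hφ_local : ∀ x y : X, restrictBall m x.1 = restrictBall m y.1 →
      restrictBall m (φ x).1 = restrictBall m (φ y).1 := by
    intro x y hxy
    refine restrictBall_eq_iff.2 fun k hk => ?_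
    rcases le_or_gt (znorm k) N with hkN | hkN
    · exact restrictBall_eq_iff.1 (hm₀ x y (restrictBall_eq_of_le (le_max_left _ _) hxy)) k hkN
    · rw [hφ x k hkN, hφ y k hkN]
      exact restrictBall_eq_iff.1 hxy k hk
  obtain ⟨σ, hσ⟩ := exists_perm_apply_eq (fun x : X => restrictBall m x.1) φ.toEquiv hφ_local
  refine ⟨m, σ, fun x => ?_⟩
  rw [patchPerm_apply, hσ x]
  exact (patch_restrictBall_of_eq_of_lt fun k hk =>
    (hφ x k ((le_max_right _ _).trans_lt hk)).symm).symm

end Topology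

theorem mapsTo_patchPerm_swap_apply {X : Set (Cfg d A)} (φ : X ≃ X) {m : ℕ}
    {σ : Perm (Pattern d m A)} (hσ : ∀ x : X, (φ x).1 = patchPerm m σ x.1) (p : Pattern d m A) :
    MapsTo (patchPerm m (swap p (σ p))) X X := by
  intro y hy
  rw [patchPerm_apply, swap_apply_def]
  split_ifs with h₁ h₂
  · rw [← h₁, ← patchPerm_apply, ← hσ ⟨y, hy⟩]
    exact (φ _).2
  · set z := φ.symm ⟨y, hy⟩
    have hyz : y = patch m z.1 (σ (restrictBall m z.1)) := by
      rw [← patchPerm_apply, ← hσ, φ.apply_symm_apply]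
    have hz : restrictBall m z.1 = p := σ.injective (by rw [← h₂, hyz, restrictBall_patch])
    rw [hyz, patch_patch, ← hz, patch_restrictBall]
    exact z.2
  · rw [patch_restrictBall]
    exact hy

theorem isAdmissibleSwap_patchPerm_swap {X : Set (Cfg d A)} {m : ℕ} {p q : Pattern d m A}
    (h : MapsTo (patchPerm m (swap p q)) X X) : IsAdmissibleSwap X (patchPerm m (swap p q)) := by
  obtain ⟨a, rfl⟩ := restrictBall_surjective p
  obtain ⟨b, rfl⟩ := restrictBall_surjective q
  exact ⟨m, a, b, (xi_eq_patchPerm_swap a b).symm, h⟩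

theorem swap_involutions_generate_F_general
    [Fintype A] [TopologicalSpace A] [DiscreteTopology A]
    (X : Set (Cfg d A)) (hX : IsSubshift X)
    (φ : X ≃ₜ X) (N : ℕ)
    (hφ : ∀ (x : X) (k : Fin d → ℤ), N < znorm k → (φ x).1 k = x.1 k) :
    ∃ L : List (Cfg d A → Cfg d A),
      (∀ g ∈ L, IsAdmissibleSwap X g) ∧
      ∀ x : X, (L.foldr (· ∘ ·) id) x.1 = (φ x).1 := by
  obtain ⟨-, hX_closed, -⟩ := hX
  obtain ⟨m, σ, hσ⟩ := exists_perm_patchPerm_eq hX_closed φ hφ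
  have hσ_mem : σ ∈ Submonoid.closure
      {τ | ∃ p q, MapsTo (patchPerm m (swap p q)) X X ∧ τ = swap p q} :=
    perm_mem_closure_swap_of_rel (mapsTo_patchPerm_swap_apply φ.toEquiv hσ)
  have hφ_mem : patchPerm m σ ∈
      Submonoid.closure {g : Function.End (Cfg d A) | IsAdmissibleSwap X g} := by
    suffices Submonoid.closure _ ≤ (Submonoid.closure _).comap (patchPerm m) from this hσ_mem
    refine Submonoid.closure_le.2 ?_
    rintro _ ⟨p, q, hpq, rfl⟩
    exact Submonoid.subset_closure (isAdmissibleSwap_patchPerm_swap hpq)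
  obtain ⟨L, hL, hprod⟩ := Submonoid.exists_list_of_mem_closure hφ_mem
  exact ⟨L, hL, fun x => by rw [hσ x, ← hprod]; rfl⟩

theorem swap_involutions_generate_F
    [Fintype A] [TopologicalSpace A] [DiscreteTopology A]
    (hd : 0 < d) (X : Set (Cfg d A)) (hX : IsSubshift X)
    (φ : X ≃ₜ X) (N : ℕ)
    (hφ : ∀ (x : X) (k : Fin d → ℤ), N < znorm k → (φ x).1 k = x.1 k) :
    ∃ L : List (Cfg d A → Cfg d A),
      (∀ g ∈ L, IsAdmissibleSwap X g) ∧
      ∀ x : X, (L.foldr (· ∘ ·) id) x.1 = (φ x).1 :=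
  swap_involutions_generate_F_general X hX φ N hφ

end PaperStmt
end

section
/- Let X ⊆ Σ^{ℤ^d} be a subshift of finite type. Then the topological Gibbs relation coincides with the Gibbs relation: for every pair x, y ∈ X that differ in only finitely many coordinates there exists φ ∈ F(X) with φ(x) = y. -/
/-!
STATEMENT 6: for a subshift of finite type `X ⊆ Σ^{ℤ^d}`, the topological Gibbs
relation coincides with the Gibbs relation: whenever `x, y ∈ X` differ in only finitely
many coordinates, there is `φ ∈ F(X)` with `φ(x) = y`.
-/

open MeasureTheory Filter Real

namespace PaperStmt

variable {d : ℕ} {A : Type*}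

/-- A subshift of finite type: defined by forbidding finitely many patterns on a
finite window `F ⊆ ℤ^d`. -/
def IsSFT (X : Set (Cfg d A)) : Prop :=
  ∃ (F : Finset (Fin d → ℤ)) (P : Set ({k // k ∈ F} → A)),
    X = {x : Cfg d A | ∀ n : Fin d → ℤ, (fun k : {k // k ∈ F} => shift n x k.1) ∉ P}

/-- Membership in the group `F(X)` of uniformly finite-dimensional homeomorphisms. -/
def memF [TopologicalSpace A] (X : Set (Cfg d A)) (φ : X ≃ₜ X) : Prop :=
  ∃ N : ℕ, ∀ (x : X) (k : Fin d → ℤ), N < znorm k → (φ x).1 k = x.1 k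

/-! ### Auxiliary material -/

lemma znorm_le_iff {k : Fin d → ℤ} {M : ℕ} : znorm k ≤ M ↔ ∀ i, (k i).natAbs ≤ M := by
  simp [znorm, Finset.sup_le_iff]

lemma znorm_add_le (a b : Fin d → ℤ) : znorm (a + b) ≤ znorm a + znorm b := by
  apply Finset.sup_le
  intro i _
  calc ((a + b) i).natAbs = (a i + b i).natAbs := rfl
    _ ≤ (a i).natAbs + (b i).natAbs := Int.natAbs_add_le _ _
    _ ≤ znorm a + znorm b :=
        add_le_add (Finset.le_sup (f := fun i => (a i).natAbs) (Finset.mem_univ i))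
          (Finset.le_sup (f := fun i => (b i).natAbs) (Finset.mem_univ i))

lemma znorm_neg (a : Fin d → ℤ) : znorm (-a) = znorm a := by
  simp [znorm]

lemma ball_finite (M : ℕ) : {k : Fin d → ℤ | znorm k ≤ M}.Finite := by
  apply Set.Finite.subset (Set.Finite.pi (fun i : Fin d => Set.finite_Icc (-(M : ℤ)) M))
  intro k hk
  intro i _
  have := znorm_le_iff.mp hk i
  simp only [Set.mem_Icc]
  omega

/-- Replace the values of `z` on the ball of radius `M` by those of `v`. -/
def repl (M : ℕ) (v z : Cfg d A) : Cfg d A := fun k => if znorm k ≤ M then v k else z k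

open scoped Classical in
/-- The swap map: if `z` agrees with `x` on the ball of radius `M`, replace its central
pattern by that of `y`; symmetrically with the roles of `x, y` reversed; otherwise do
nothing. -/
noncomputable def gg (M : ℕ) (x y z : Cfg d A) : Cfg d A :=
  if ∀ k, znorm k ≤ M → z k = x k then repl M y z
  else if ∀ k, znorm k ≤ M → z k = y k then repl M x z
  else z

lemma gg_far {M : ℕ} {x y z : Cfg d A} {k : Fin d → ℤ} (hk : M < znorm k) :
    gg M x y z k = z k := by
  have hk' : ¬ znorm k ≤ M := by omega
  unfold gg
  split_ifs <;> simp [repl, hk']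

lemma gg_invol (M : ℕ) (x y z : Cfg d A) : gg M x y (gg M x y z) = z := by
  classical
  by_cases h1 : ∀ k, znorm k ≤ M → z k = x k
  · have hgz : gg M x y z = repl M y z := by unfold gg; rw [if_pos h1]
    by_cases h : ∀ k, znorm k ≤ M → repl M y z k = x k
    · rw [hgz]
      unfold gg
      rw [if_pos h]
      funext k
      simp only [repl]
      split_ifs with hk
      · have hyx := h k hk
        simp only [repl, if_pos hk] at hyx
        rw [hyx, h1 k hk]
      · rfl
    · have h2 : ∀ k, znorm k ≤ M → repl M y z k = y k := by
        intro k hk; simp [repl, hk]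
      rw [hgz]
      unfold gg
      rw [if_neg h, if_pos h2]
      funext k
      simp only [repl]
      split_ifs with hk
      · exact (h1 k hk).symm
      · rfl
  · by_cases h2 : ∀ k, znorm k ≤ M → z k = y k
    · have hgz : gg M x y z = repl M x z := by unfold gg; rw [if_neg h1, if_pos h2]
      have h3 : ∀ k, znorm k ≤ M → repl M x z k = x k := by
        intro k hk; simp [repl, hk]
      rw [hgz]
      unfold gg
      rw [if_pos h3]
      funext k
      simp only [repl]
      split_ifs with hk
      · exact (h2 k hk).symm
      · rfl
    · have hgz : gg M x y z = z := by unfold gg; rw [if_neg h1, if_neg h2]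
      rw [hgz, hgz]

lemma gg_self {M : ℕ} {x y : Cfg d A} (hxy : ∀ k, M < znorm k → x k = y k) :
    gg M x y x = y := by
  classical
  unfold gg
  rw [if_pos (fun k _ => rfl)]
  funext k
  simp only [repl]
  split_ifs with hk
  · rfl
  · exact hxy k (by omega)

lemma isClopen_match [TopologicalSpace A] [DiscreteTopology A] (M : ℕ) (x : Cfg d A) :
    IsClopen {z : Cfg d A | ∀ k, znorm k ≤ M → z k = x k} := by
  have : {z : Cfg d A | ∀ k, znorm k ≤ M → z k = x k}
      = ⋂ k ∈ {k : Fin d → ℤ | znorm k ≤ M}, {z : Cfg d A | z k = x k} := by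
    ext z
    simp [Set.mem_iInter]
  rw [this]
  apply Set.Finite.isClopen_biInter (ball_finite M)
  intro k _
  exact (isClopen_discrete {x k}).preimage (continuous_apply k)

lemma repl_continuous [TopologicalSpace A] (M : ℕ) (v : Cfg d A) :
    Continuous (repl (d := d) (A := A) M v) := by
  apply continuous_pi
  intro k
  by_cases h : znorm k ≤ M
  · simp only [repl, if_pos h]
    exact continuous_const
  · simp only [repl, if_neg h]
    exact continuous_apply k

lemma gg_continuous [TopologicalSpace A] [DiscreteTopology A] (M : ℕ) (x y : Cfg d A) :
    Continuous (gg (d := d) (A := A) M x y) := by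
  classical
  have hU := isClopen_match (A := A) M x
  have hV := isClopen_match (A := A) M y
  unfold gg
  apply Continuous.if
  · intro a ha
    rw [hU.frontier_eq] at ha
    exact absurd ha (Set.notMem_empty a)
  · exact repl_continuous M y
  · apply Continuous.if
    · intro a ha
      rw [hV.frontier_eq] at ha
      exact absurd ha (Set.notMem_empty a)
    · exact repl_continuous M x
    · exact continuous_id

/-- Core combinatorial lemma: replacing the central pattern of `z` (which agrees with
`u` on the big ball) by `v` (which agrees with `u` off the small ball) stays in the SFT. -/
lemma repl_mem {F : Finset (Fin d → ℤ)} {P : Set ({k // k ∈ F} → A)}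
    {X : Set (Cfg d A)}
    (hXP : X = {x : Cfg d A | ∀ n : Fin d → ℤ, (fun k : {k // k ∈ F} => shift n x k.1) ∉ P})
    {N r : ℕ} (hr : ∀ f ∈ F, znorm f ≤ r)
    {u v z : Cfg d A} (hv : v ∈ X) (hz : z ∈ X)
    (huv : ∀ k, N < znorm k → u k = v k)
    (hzu : ∀ k, znorm k ≤ N + 2 * r → z k = u k) :
    repl (N + 2 * r) v z ∈ X := by
  subst hXP
  intro n
  by_cases hn : znorm n ≤ N + r
  · have hpat : (fun k : {k // k ∈ F} => shift n (repl (N + 2 * r) v z) k.1)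
        = fun k : {k // k ∈ F} => shift n v k.1 := by
      funext k
      obtain ⟨f, hf⟩ := k
      have h1 : znorm (f + n) ≤ N + 2 * r := by
        have := znorm_add_le f n
        have := hr f hf
        omega
      simp only [shift, repl, if_pos h1]
    rw [hpat]
    exact hv n
  · have hpat : (fun k : {k // k ∈ F} => shift n (repl (N + 2 * r) v z) k.1)
        = fun k : {k // k ∈ F} => shift n z k.1 := by
      funext k
      obtain ⟨f, hf⟩ := k
      have hfn : N < znorm (f + n) := by
        have h2 : znorm ((f + n) + (-f)) ≤ znorm (f + n) + znorm (-f) := znorm_add_le _ _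
        have h3 : (f + n) + (-f) = n := by abel
        rw [h3, znorm_neg] at h2
        have := hr f hf
        omega
      simp only [shift, repl]
      split_ifs with h
      · rw [← huv _ hfn, ← hzu _ h]
      · rfl
    rw [hpat]
    exact hz n

lemma gg_mem {F : Finset (Fin d → ℤ)} {P : Set ({k // k ∈ F} → A)}
    {X : Set (Cfg d A)}
    (hXP : X = {x : Cfg d A | ∀ n : Fin d → ℤ, (fun k : {k // k ∈ F} => shift n x k.1) ∉ P})
    {N r : ℕ} (hr : ∀ f ∈ F, znorm f ≤ r)
    {x y : Cfg d A} (hx : x ∈ X) (hy : y ∈ X)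
    (hxy : ∀ k, N < znorm k → x k = y k)
    {z : Cfg d A} (hz : z ∈ X) :
    gg (N + 2 * r) x y z ∈ X := by
  classical
  unfold gg
  split_ifs with h1 h2
  · exact repl_mem hXP hr hy hz hxy h1
  · exact repl_mem hXP hr hx hz (fun k hk => (hxy k hk).symm) h2
  · exact hz

theorem topGibbs_eq_gibbs_of_SFT
    [Fintype A] [TopologicalSpace A] [DiscreteTopology A]
    (hd : 0 < d) (X : Set (Cfg d A)) (hX : IsSubshift X) (hSFT : IsSFT X)
    (x y : Cfg d A) (hx : x ∈ X) (hy : y ∈ X)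
    (hfin : {k : Fin d → ℤ | x k ≠ y k}.Finite) :
    ∃ φ : X ≃ₜ X, memF X φ ∧ φ ⟨x, hx⟩ = ⟨y, hy⟩ := by
  classical
  obtain ⟨F, P, hXP⟩ := hSFT
  set r : ℕ := F.sup znorm with hr_def
  set N : ℕ := hfin.toFinset.sup znorm with hN_def
  set M : ℕ := N + 2 * r with hM_def
  have hr : ∀ f ∈ F, znorm f ≤ r := fun f hf => Finset.le_sup hf
  have hxy : ∀ k, N < znorm k → x k = y k := by
    intro k hk
    by_contra h
    have hk' : k ∈ hfin.toFinset := hfin.mem_toFinset.mpr h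
    have := Finset.le_sup (f := znorm) hk'
    omega
  have hmem : ∀ z ∈ X, gg M x y z ∈ X := fun z hz => gg_mem hXP hr hx hy hxy hz
  refine ⟨⟨⟨fun z => ⟨gg M x y z.1, hmem z.1 z.2⟩, fun z => ⟨gg M x y z.1, hmem z.1 z.2⟩,
      fun z => Subtype.ext (gg_invol M x y z.1),
      fun z => Subtype.ext (gg_invol M x y z.1)⟩,
      ((gg_continuous M x y).comp continuous_subtype_val).subtype_mk _,
      ((gg_continuous M x y).comp continuous_subtype_val).subtype_mk _⟩, ?_, ?_⟩
  · exact ⟨M, fun z k hk => gg_far hk⟩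
  · exact Subtype.ext (gg_self (fun k hk => hxy k (by omega)))

end PaperStmt
end

section
/- Let X ⊆ Σ^ℤ be a subshift, ν a non-atomic shift-invariant Borel probability measure on X, P the symmetric Bernoulli(1/2,1/2) product measure on {−1,1}^ℤ, and ν̂ = (P × ν) ∘ π^{−1} on the Kalikow-type subshift X̂. Then ν̂ is 𝔗_{X̂}-invariant: for every Borel injection g : A → B with graph contained in 𝔗_{X̂} and every Borel A' ⊆ A, ν̂(g(A')) = ν̂(A'). -/
/-!
For `P`-almost every `w` the walk `n ↦ Φ_n(w)` is recurrent. Indeed, "the walk is eventually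
bounded above" is a shift-invariant event of the i.i.d. sequence `w`, hence has probability `0`
or `1` (mixing); by the symmetry `w ↦ -w` "eventually bounded below" has the same probability,
and a walk eventually trapped in a strip of width `2K` avoids every run of `2K + 1` steps `+1`,
which has probability zero.

For recurrent `w`, the map `π` is injective at `(w, y)`, and every point of `X̂` differing from
`π (w, y)` in finitely many coordinates is `π (w', σ^c y)` where `w'` flips finitely many steps of
`w`. These flip-and-shift moves form a countable family of `(P × ν)`-preserving automorphisms,
so upstairs a Borel partial injection `g` inside the Gibbs relation is piecewise one of these
moves, and `ν̂ (g A') = ν̂ A'` follows by summing over the pieces.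
-/

open MeasureTheory Filter

namespace PaperStmt

def shift1 {A : Type*} (x : ℤ → A) : ℤ → A := fun k => x (k + 1)

def shiftBy {A : Type*} (i : ℤ) (x : ℤ → A) : ℤ → A := fun k => x (k + i)

def IsSubshift1 {A : Type*} [TopologicalSpace A] (X : Set (ℤ → A)) : Prop :=
  X.Nonempty ∧ IsClosed X ∧ ∀ n : ℤ, ∀ x ∈ X, shiftBy n x ∈ X

noncomputable def walk (w : ℤ → ℤ) (n : ℤ) : ℤ :=
  if 0 ≤ n then ∑ j ∈ Finset.Ico (0 : ℤ) n, w j else -∑ j ∈ Finset.Ico n (0 : ℤ), w j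

noncomputable def kalikowPi {A : Type*} (w : ℤ → ℤ) (y : ℤ → A) : ℤ → ℤ × A :=
  fun n => (w n, y (walk w n))

/-- The Kalikow-type subshift associated to a subshift `X`. -/
def kalikowShift {A : Type*} (X : Set (ℤ → A)) : Set (ℤ → ℤ × A) :=
  {z | ∃ w : ℤ → ℤ, (∀ j : ℤ, w j = 1 ∨ w j = -1) ∧ ∃ y ∈ X, z = kalikowPi w y}

def gibbsRel1 {A : Type*} (X : Set (ℤ → A)) : Set ((ℤ → A) × (ℤ → A)) :=
  {p | p.1 ∈ X ∧ p.2 ∈ X ∧ {k : ℤ | p.1 k ≠ p.2 k}.Finite}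

def IsTailInvariant1 {A : Type*} [MeasurableSpace A] (μ : Measure (ℤ → A))
    (R : Set ((ℤ → A) × (ℤ → A))) : Prop :=
  ∀ (D : Set (ℤ → A)) (g : (ℤ → A) → (ℤ → A)), MeasurableSet D →
    Measurable (D.restrict g) → Set.InjOn g D → (∀ x ∈ D, (x, g x) ∈ R) →
    ∀ A' ⊆ D, MeasurableSet A' → μ (g '' A') = μ A'

open ProbabilityTheory
open scoped ENNReal symmDiff

lemma walk_sub_walk (w : ℤ → ℤ) {a b : ℤ} (hab : a ≤ b) :
    walk w b - walk w a = ∑ j ∈ Finset.Ico a b, w j := by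
  have key : ∀ {a b c : ℤ}, a ≤ b → b ≤ c →
      ∑ j ∈ Finset.Ico a b, w j + ∑ j ∈ Finset.Ico b c, w j = ∑ j ∈ Finset.Ico a c, w j :=
    fun hab hbc => by
      rw [← Finset.sum_union (Finset.Ico_disjoint_Ico_consecutive _ _ _),
        Finset.Ico_union_Ico_eq_Ico hab hbc]
  unfold walk
  split_ifs with hb ha ha
  · linarith [key ha hab]
  · linarith [key (not_le.1 ha).le hb]
  · omega
  · linarith [key hab (not_le.1 hb).le]

lemma walk_add_one (w : ℤ → ℤ) (n : ℤ) : walk w (n + 1) = walk w n + w n := by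
  linarith [walk_sub_walk w (Int.le_add_one le_rfl : n ≤ n + 1),
    show ∑ j ∈ Finset.Ico n (n + 1), w j = w n by
      rw [Finset.Ico_add_one_right_eq_Icc, Finset.Icc_self, Finset.sum_singleton]]

lemma walk_neg (w : ℤ → ℤ) (n : ℤ) : walk (-w) n = -walk w n := by
  unfold walk; split_ifs <;> simp

lemma walk_shiftBy (w : ℤ → ℤ) (m n : ℤ) :
    walk (shiftBy m w) n = walk w (n + m) - walk w m := by
  have hsum : ∀ a b : ℤ,
      ∑ j ∈ Finset.Ico a b, shiftBy m w j = ∑ j ∈ Finset.Ico (a + m) (b + m), w j :=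
    fun a b => by rw [← Finset.sum_Ico_add]; simp only [shiftBy, add_comm]
  rcases le_total 0 n with hn | hn <;>
  · have := walk_sub_walk (shiftBy m w) hn
    rw [hsum, zero_add, ← walk_sub_walk w (by omega), show walk (shiftBy m w) 0 = 0 by simp [walk]]
      at this
    linarith

lemma exists_eventually_walk_eq_add {w w' : ℤ → ℤ} (h : {j | w j ≠ w' j}.Finite) :
    ∃ c, ∀ᶠ n in atTop, walk w' n = walk w n + c := by
  obtain ⟨N, hN⟩ := eventually_atTop.1 (h.eventually_cofinite_notMem.filter_mono atTop_le_cofinite)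
  refine ⟨walk w' N - walk w N, eventually_atTop.2 ⟨N, fun n hn => ?_⟩⟩
  have hsum : ∑ j ∈ Finset.Ico N n, w j = ∑ j ∈ Finset.Ico N n, w' j :=
    Finset.sum_congr rfl fun j hj => not_not.1 (hN j (Finset.mem_Ico.1 hj).1)
  linarith [walk_sub_walk w hn, walk_sub_walk w' hn]

def signSeqs : Set (ℤ → ℤ) := {w | ∀ j, w j = 1 ∨ w j = -1}

def IsRecurrent (w : ℤ → ℤ) : Prop := ∀ m : ℤ, ∃ᶠ n in atTop, walk w n = m

def recurrentSignSeqs : Set (ℤ → ℤ) := signSeqs ∩ {w | IsRecurrent w}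

lemma exists_walk_eq_of_le_of_le {w : ℤ → ℤ} (hw : w ∈ signSeqs) {a b m : ℤ} (hab : a ≤ b)
    (ha : walk w a ≤ m) (hb : m ≤ walk w b) : ∃ n, a ≤ n ∧ walk w n = m := by
  induction b, hab using Int.leInduction with
  | base => exact ⟨a, le_rfl, le_antisymm ha hb⟩
  | succ b hab ih =>
    by_cases hm : m ≤ walk w b
    · exact ih hm
    · refine ⟨b + 1, by omega, ?_⟩
      rw [walk_add_one] at hb ⊢
      rcases hw b with h | h <;> rw [h] at hb ⊢ <;> omega

lemma isRecurrent_of_frequently {w : ℤ → ℤ} (hw : w ∈ signSeqs)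
    (hup : ∀ K, ∃ᶠ n in atTop, K ≤ walk w n) (hdown : ∀ K, ∃ᶠ n in atTop, walk w n ≤ K) :
    IsRecurrent w := by
  intro m
  rw [frequently_atTop]
  intro N
  obtain ⟨a, haN, ha⟩ := frequently_atTop.1 (hdown m) N
  obtain ⟨b, hab, hb⟩ := frequently_atTop.1 (hup m) a
  obtain ⟨n, han, hn⟩ := exists_walk_eq_of_le_of_le hw hab ha hb
  exact ⟨n, haN.trans han, hn⟩

lemma IsRecurrent.of_finite_ne {w w' : ℤ → ℤ} (hw : IsRecurrent w)
    (h : {j | w j ≠ w' j}.Finite) : IsRecurrent w' := by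
  obtain ⟨c, hc⟩ := exists_eventually_walk_eq_add h
  intro m
  exact ((hw (m - c)).and_eventually hc).mono fun n ⟨hn, hn'⟩ => by omega

def flipOn (S : Finset ℤ) (w : ℤ → ℤ) : ℤ → ℤ := S.piecewise (-w) w

lemma flipOn_flipOn (S : Finset ℤ) (w : ℤ → ℤ) : flipOn S (flipOn S w) = w := by
  ext j; by_cases hj : j ∈ S <;> simp [flipOn, hj]

lemma flipOn_mem_signSeqs {w : ℤ → ℤ} (hw : w ∈ signSeqs) (S : Finset ℤ) :
    flipOn S w ∈ signSeqs := fun j => by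
  by_cases hj : j ∈ S <;> rcases hw j with h | h <;> simp [flipOn, hj, h]

lemma IsRecurrent.flipOn {w : ℤ → ℤ} (hw : IsRecurrent w) (S : Finset ℤ) :
    IsRecurrent (flipOn S w) :=
  hw.of_finite_ne <| S.finite_toSet.subset fun j hj => by
    by_contra hjS
    exact hj (Finset.piecewise_eq_of_notMem _ _ _ (Finset.mem_coe.not.1 hjS)).symm

lemma flipOn_mem_recurrentSignSeqs {w : ℤ → ℤ} (hw : w ∈ recurrentSignSeqs) (S : Finset ℤ) :
    flipOn S w ∈ recurrentSignSeqs :=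
  ⟨flipOn_mem_signSeqs hw.1 S, hw.2.flipOn S⟩

lemma flipOn_eq_of_mem_signSeqs {w w' : ℤ → ℤ} (hw : w ∈ signSeqs) (hw' : w' ∈ signSeqs)
    {S : Finset ℤ} (hS : ∀ j, j ∈ S ↔ w j ≠ w' j) : flipOn S w = w' := by
  ext j
  by_cases hj : j ∈ S <;> have := (hS j).not <;> rcases hw j with h | h <;>
    rcases hw' j with h' | h' <;> simp_all [flipOn]

lemma eq_of_kalikowPi_eq {B : Type*} {w w' : ℤ → ℤ} {y y' : ℤ → B} (hw : IsRecurrent w)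
    (h : kalikowPi w y = kalikowPi w' y') : w = w' ∧ y = y' := by
  obtain rfl : w = w' := funext fun n => congrArg Prod.fst (congrFun h n)
  refine ⟨rfl, funext fun k => ?_⟩
  obtain ⟨n, rfl⟩ := (hw k).exists
  exact congrArg Prod.snd (congrFun h n)

lemma exists_kalikowPi_eq_flipOn_shiftBy {B : Type*} {w w' : ℤ → ℤ} {y y' : ℤ → B}
    (hw : w ∈ recurrentSignSeqs) (hw' : w' ∈ signSeqs)
    (hfin : {k | kalikowPi w y k ≠ kalikowPi w' y' k}.Finite) :
    ∃ (S : Finset ℤ) (c : ℤ), kalikowPi w' y' = kalikowPi (flipOn S w) (shiftBy c y) := by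
  have hd : {j | w j ≠ w' j}.Finite := hfin.subset fun j hj h => hj (congrArg Prod.fst h)
  obtain ⟨c, hc⟩ := exists_eventually_walk_eq_add hd
  have hagree : ∀ᶠ n in atTop, kalikowPi w y n = kalikowPi w' y' n :=
    (hfin.eventually_cofinite_notMem.filter_mono atTop_le_cofinite).mono fun n hn => not_not.1 hn
  -- recurrence of `w` carries the agreement far to the right over to all of the scenery
  have hy : ∀ k, y' (k + c) = y k := fun k => by
    obtain ⟨n, rfl, hnc, hn⟩ := ((hw.2 k).and_eventually (hc.and hagree)).exists
    rw [← hnc]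
    exact (congrArg Prod.snd hn).symm
  refine ⟨hd.toFinset, -c, ?_⟩
  rw [flipOn_eq_of_mem_signSeqs hw.1 hw' fun j => hd.mem_toFinset]
  ext n : 1
  simp [kalikowPi, shiftBy, ← hy]

lemma gibbsRel1_symm {B : Type*} {X : Set (ℤ → B)} {x y : ℤ → B} (h : (x, y) ∈ gibbsRel1 X) :
    (y, x) ∈ gibbsRel1 X :=
  ⟨h.2.1, h.1, by simpa only [ne_comm] using h.2.2⟩

section InfinitePi

variable {ι : Type*} {X : ι → Type*} [∀ i, MeasurableSpace (X i)] {μ : ∀ i, Measure (X i)}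
  [∀ i, IsProbabilityMeasure (μ i)]

lemma measurePreserving_pi_infinitePi {f : ∀ i, X i → X i}
    (hf : ∀ i, MeasurePreserving (f i) (μ i) (μ i)) :
    MeasurePreserving (fun x i => f i (x i)) (Measure.infinitePi μ) (Measure.infinitePi μ) where
  measurable := measurable_pi_lambda _ fun i => (hf i).measurable.comp (measurable_pi_apply i)
  map_eq := by
    rw [Measure.infinitePi_map_pi _ fun i => (hf i).measurable]
    simp_rw [(hf _).map_eq]

lemma infinitePi_inter_eq_mul {S T : Set ι} (hST : Disjoint S T) {s t : Set (∀ i, X i)}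
    (hs : MeasurableSet[cylinderEvents S] s) (ht : MeasurableSet[cylinderEvents T] t) :
    Measure.infinitePi μ (s ∩ t) = Measure.infinitePi μ s * Measure.infinitePi μ t :=
  (Indep_iff _ _ _).1 (indep_iSup_of_disjoint (fun i => (measurable_pi_apply i).comap_le)
    (iIndepFun_infinitePi (X := fun _ => id) fun _ => measurable_id).iIndep hST) s t hs ht

end InfinitePi

section Shift

variable {α : Type*} [MeasurableSpace α]

def shiftByEquiv (c : ℤ) : (ℤ → α) ≃ᵐ (ℤ → α) :=
  MeasurableEquiv.piCongrLeft (fun _ => α) (Equiv.subRight c)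

lemma coe_shiftByEquiv (c : ℤ) : ⇑(shiftByEquiv (α := α) c) = shiftBy c := by
  ext w k
  simpa [shiftBy, shiftByEquiv] using
    MeasurableEquiv.piCongrLeft_apply_apply (β := fun _ => α) (Equiv.subRight c) w (k + c)

lemma measurableSet_shiftBy_preimage {Δ : Set ℤ} {s : Set (ℤ → α)}
    (hs : MeasurableSet[cylinderEvents Δ] s) (m : ℤ) :
    MeasurableSet[cylinderEvents ((· + m) '' Δ)] (shiftBy m ⁻¹' s) :=
  (measurable_cylinderEvents_iff.2 fun _ hi =>
    measurable_cylinderEvent_apply (Set.mem_image_of_mem (· + m) hi)) hs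

lemma exists_disjoint_image_add (J : Finset ℤ) :
    ∃ m : ℕ, Disjoint (J : Set ℤ) ((· + (m : ℤ)) '' J) := by
  refine ⟨2 * ∑ j ∈ J, j.natAbs + 1, Set.disjoint_left.2 ?_⟩
  rintro _ hj ⟨i, hi, rfl⟩
  dsimp only at hj
  have := Finset.single_le_sum (fun j _ => Nat.zero_le (Int.natAbs j)) (Finset.mem_coe.1 hi)
  have := Finset.single_le_sum (fun j _ => Nat.zero_le (Int.natAbs j)) (Finset.mem_coe.1 hj)
  omega

variable (ν : Measure α) [IsProbabilityMeasure ν]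

lemma measurePreserving_shiftBy_infinitePi (m : ℤ) :
    MeasurePreserving (shiftBy m) (Measure.infinitePi fun _ : ℤ => ν)
      (Measure.infinitePi fun _ : ℤ => ν) := by
  have h := Measure.infinitePi_map_piCongrLeft (fun _ : ℤ => ν) (Equiv.subRight m)
  rw [← shiftByEquiv, coe_shiftByEquiv] at h
  exact ⟨coe_shiftByEquiv (α := α) m ▸ (shiftByEquiv m).measurable, h⟩

lemma exists_infinitePi_inter_shiftBy_preimage_eq_mul {B : Set (ℤ → α)}
    (hB : B ∈ measurableCylinders fun _ : ℤ => α) :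
    ∃ m : ℕ, Measure.infinitePi (fun _ => ν) (B ∩ shiftBy m ⁻¹' B) =
      Measure.infinitePi (fun _ => ν) B * Measure.infinitePi (fun _ => ν) B := by
  obtain ⟨J, S, hS, hBeq⟩ := (mem_measurableCylinders _).1 hB
  have hBJ : MeasurableSet[cylinderEvents J] B := by
    rw [hBeq]; exact measurable_restrict_cylinderEvents (J : Set ℤ) hS
  obtain ⟨m, hm⟩ := exists_disjoint_image_add J
  refine ⟨m, ?_⟩
  rw [infinitePi_inter_eq_mul hm hBJ (measurableSet_shiftBy_preimage hBJ m),
    (measurePreserving_shiftBy_infinitePi ν m).measure_preimage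
      (cylinderEvents_le_pi _ hBJ).nullMeasurableSet]

/-- Approximating `E` by a cylinder `B`, the identity `μ (B ∩ σ⁻ᵐ B) = μ B ^ 2` passes to
`μ E = μ E ^ 2`. -/
lemma dist_measureReal_mul_self_le_of_shiftBy_preimage_eq {E : Set (ℤ → α)}
    (hE : MeasurableSet E) (hinv : ∀ m : ℕ, shiftBy (m : ℤ) ⁻¹' E = E) {ε : ℝ} (hε : 0 < ε) :
    dist ((Measure.infinitePi fun _ => ν).real E)
      ((Measure.infinitePi fun _ => ν).real E * (Measure.infinitePi fun _ => ν).real E) ≤ ε := by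
  set μ := Measure.infinitePi fun _ : ℤ => ν with hμ
  obtain ⟨B, hBcyl, hBE⟩ := exists_measure_symmDiff_lt_of_generateFrom_isSetRing (μ := μ)
    isSetAlgebra_measurableCylinders.isSetRing
    ⟨{Set.univ}, Set.countable_singleton _,
      by simpa using univ_mem_measurableCylinders (fun _ : ℤ => α), by simp⟩
    generateFrom_measurableCylinders.symm hE (ENNReal.ofReal_pos.2 (by positivity : 0 < ε / 4))
  have hB := MeasurableSet.of_mem_measurableCylinders hBcyl
  obtain ⟨m, hmix⟩ := exists_infinitePi_inter_shiftBy_preimage_eq_mul ν hBcyl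
  have hshift := measurePreserving_shiftBy_infinitePi ν m
  set B' := shiftBy (m : ℤ) ⁻¹' B
  have hBB' : μ.real (B ∩ B') = μ.real B * μ.real B := by
    rw [measureReal_def, hμ, hmix, ENNReal.toReal_mul]
    rfl
  have hBE' : μ.real (B ∆ E) ≤ ε / 4 :=
    ENNReal.toReal_le_of_le_ofReal (by positivity) hBE.le
  have hB'E : μ.real (B' ∆ E) = μ.real (B ∆ E) := by
    conv_lhs => rw [← hinv m, ← Set.preimage_symmDiff]
    exact hshift.measureReal_preimage (hB.symmDiff hE).nullMeasurableSet
  have h1 := abs_le.1 (abs_measureReal_sub_le_measureReal_symmDiff hB.nullMeasurableSet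
    hE.nullMeasurableSet (μ := μ))
  have h2 := abs_le.1 (abs_measureReal_sub_le_measureReal_symmDiff
    (hB.inter (hshift.measurable hB)).nullMeasurableSet hE.nullMeasurableSet (μ := μ))
  have h3 : μ.real ((B ∩ B') ∆ E) ≤ μ.real (B ∆ E) + μ.real (B' ∆ E) :=
    (measureReal_mono fun x => by
      simp only [Set.mem_symmDiff, Set.mem_union, Set.mem_inter_iff]; tauto).trans
      (measureReal_union_le _ _)
  rw [hBB'] at h2
  rw [Real.dist_eq, abs_le]
  constructor <;> nlinarith [measureReal_nonneg (μ := μ) (s := E),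
    measureReal_nonneg (μ := μ) (s := B), measureReal_le_one (μ := μ) (s := E),
    measureReal_le_one (μ := μ) (s := B)]

lemma measure_eq_zero_or_one_of_shiftBy_preimage_eq {E : Set (ℤ → α)} (hE : MeasurableSet E)
    (hinv : ∀ m : ℕ, shiftBy (m : ℤ) ⁻¹' E = E) :
    Measure.infinitePi (fun _ => ν) E = 0 ∨ Measure.infinitePi (fun _ => ν) E = 1 := by
  refine measure_eq_zero_or_one_of_indepSet_self
    ((indepSet_iff_measure_inter_eq_mul hE hE _).2 ?_)
  rw [Set.inter_self, ← ENNReal.toReal_eq_toReal_iff' (by finiteness) (by finiteness),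
    ENNReal.toReal_mul]
  exact eq_of_forall_dist_le fun ε hε =>
    dist_measureReal_mul_self_le_of_shiftBy_preimage_eq ν hE hinv hε

end Shift

noncomputable def signLaw : Measure ℤ := (2⁻¹ : ℝ≥0∞) • (Measure.dirac 1 + Measure.dirac (-1))

instance : IsProbabilityMeasure signLaw :=
  ⟨by simp [signLaw, ENNReal.inv_two_add_inv_two]⟩

lemma signLaw_singleton (k : ℤ) :
    signLaw {k} = if k = 1 ∨ k = -1 then 2⁻¹ else 0 := by
  rcases eq_or_ne k 1 with rfl | h1
  · simp [signLaw]
  rcases eq_or_ne k (-1) with rfl | h2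
  · simp [signLaw]
  simp [signLaw, h1, h2, Ne.symm h2]

lemma measurePreserving_neg_signLaw : MeasurePreserving Neg.neg signLaw signLaw :=
  ⟨measurable_neg, by
    simp [signLaw, Measure.map_smul, Measure.map_add _ _ measurable_neg,
      Measure.map_dirac' measurable_neg, add_comm]⟩

noncomputable abbrev coinTosses : Measure (ℤ → ℤ) := Measure.infinitePi fun _ => signLaw

lemma signSeqs_eq_pi : signSeqs = Set.univ.pi fun _ => {1, -1} := by
  ext w; simp [signSeqs]

lemma measurableSet_signSeqs : MeasurableSet signSeqs :=
  signSeqs_eq_pi ▸ .univ_pi fun _ => (Set.toFinite _).measurableSet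

lemma coinTosses_signSeqs : coinTosses signSeqs = 1 := by
  rw [signSeqs_eq_pi, Measure.infinitePi_pi_univ _ fun _ => (Set.toFinite _).measurableSet]
  simp [signLaw, ENNReal.inv_two_add_inv_two]

def cyl (F : Finset ℤ) (a : ℤ → ℤ) : Set (ℤ → ℤ) := {w | ∀ j ∈ F, w j = a j}

lemma measurableSet_cyl (F : Finset ℤ) (a : ℤ → ℤ) :
    MeasurableSet[cylinderEvents F] (cyl F a) := by
  have : cyl F a = ⋂ j ∈ F, (fun w => w j) ⁻¹' {a j} := by ext; simp [cyl]
  rw [this]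
  exact .biInter F.countable_toSet fun j hj => measurable_cylinderEvent_apply hj (.singleton _)

lemma isPiSystem_cyl : IsPiSystem {s | ∃ F a, s = cyl F a} := by
  rintro _ ⟨F, a, rfl⟩ _ ⟨F', a', rfl⟩ ⟨w₀, h, h'⟩
  refine ⟨F ∪ F', w₀, Set.ext fun w => ?_⟩
  simp only [cyl, Set.mem_inter_iff, Set.mem_ofPred_eq, Finset.mem_union] at h h' ⊢
  constructor
  · rintro ⟨hw, hw'⟩ j (hj | hj)
    · rw [hw j hj, h j hj]
    · rw [hw' j hj, h' j hj]
  · intro hw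
    exact ⟨fun j hj => (hw j (.inl hj)).trans (h j hj),
      fun j hj => (hw j (.inr hj)).trans (h' j hj)⟩

lemma generateFrom_cyl :
    MeasurableSpace.generateFrom {s | ∃ F a, s = cyl F a} = MeasurableSpace.pi := by
  refine le_antisymm (MeasurableSpace.generateFrom_le ?_) (iSup_le fun j => ?_)
  · rintro _ ⟨F, a, rfl⟩
    exact cylinderEvents_le_pi _ (measurableSet_cyl F a)
  · have : Measurable[MeasurableSpace.generateFrom {s | ∃ F a, s = cyl F a}] fun w : ℤ → ℤ => w j :=
      @measurable_to_countable' _ _ _ _ (MeasurableSpace.generateFrom _) _ fun k =>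
        MeasurableSpace.measurableSet_generateFrom ⟨{j}, fun _ => k, by ext; simp [cyl]⟩
    exact this.comap_le

lemma coinTosses_cyl (F : Finset ℤ) (a : ℤ → ℤ) :
    coinTosses (cyl F a) = ∏ j ∈ F, signLaw {a j} := by
  have hpi : cyl F a = (F : Set ℤ).pi fun j => {a j} := by ext; simp [cyl]
  rw [hpi, Measure.infinitePi_pi _ fun _ _ => .singleton _]

lemma eq_coinTosses {P : Measure (ℤ → ℤ)} [IsProbabilityMeasure P] (hsupp : P signSeqs = 1)
    (hcyl : ∀ F a, (∀ j ∈ F, a j = 1 ∨ a j = -1) → P (cyl F a) = (1 / 2) ^ F.card) :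
    P = coinTosses := by
  refine ext_of_generate_finite _ generateFrom_cyl.symm isPiSystem_cyl ?_ (by simp)
  rintro _ ⟨F, a, rfl⟩
  simp_rw [coinTosses_cyl, signLaw_singleton]
  by_cases ha : ∀ j ∈ F, a j = 1 ∨ a j = -1
  · rw [Finset.prod_congr rfl fun j hj => if_pos (ha j hj), Finset.prod_const, hcyl F a ha,
      one_div]
  · push Not at ha
    obtain ⟨j, hj, hj1, hj2⟩ := ha
    rw [Finset.prod_eq_zero hj (if_neg (by tauto))]
    refine measure_mono_null (fun w hw hws => ?_ : cyl F a ⊆ signSeqsᶜ)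
      ((prob_compl_eq_zero_iff measurableSet_signSeqs).2 hsupp)
    rcases hws j with h | h <;> simp_all [cyl]

lemma measurePreserving_flipOn_coinTosses (S : Finset ℤ) :
    MeasurePreserving (flipOn S) coinTosses coinTosses := by
  convert measurePreserving_pi_infinitePi (μ := fun _ => signLaw)
    (f := fun j => if j ∈ S then Neg.neg else id)
    fun j => by split_ifs; exacts [measurePreserving_neg_signLaw, .id _] with w j
  by_cases hj : j ∈ S <;> simp [flipOn, hj]

lemma measurePreserving_neg_coinTosses : MeasurePreserving Neg.neg coinTosses coinTosses :=
  measurePreserving_pi_infinitePi fun _ => measurePreserving_neg_signLaw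

lemma measurable_walk (n : ℤ) : Measurable fun w : ℤ → ℤ => walk w n := by
  unfold walk
  split_ifs
  · exact Finset.measurable_sum _ fun j _ => measurable_pi_apply j
  · exact (Finset.measurable_sum _ fun j _ => measurable_pi_apply j).neg

lemma coinTosses_iInter_compl_blocks (N : ℤ) (L M : ℕ) :
    coinTosses (⋂ i ∈ Finset.range M, (cyl (Finset.Ico (N + i * L) (N + i * L + L)) 1)ᶜ) =
      (1 - 2⁻¹ ^ L) ^ M := by
  induction M with
  | zero => simp
  | succ M ih =>
    have hpast : MeasurableSet[cylinderEvents (Set.Ico N (N + M * L))]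
        (⋂ i ∈ Finset.range M, (cyl (Finset.Ico (N + i * L) (N + i * L + L)) 1)ᶜ) := by
      refine .biInter (Finset.countable_toSet _) fun i hi => ?_
      refine (cylinderEvents_mono (fun j hj => ?_) _ (measurableSet_cyl _ _)).compl
      have hiM : (i : ℤ) + 1 ≤ M := by exact_mod_cast Finset.mem_range.1 hi
      have : ((i : ℤ) + 1) * L ≤ M * L := mul_le_mul_of_nonneg_right hiM (by positivity)
      simp only [Finset.coe_Ico, Set.mem_Ico] at hj ⊢
      constructor <;> nlinarith [(by positivity : (0 : ℤ) ≤ i * L)]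
    have hdisj : Disjoint (Set.Ico N (N + M * L))
        ((Finset.Ico (N + M * L) (N + M * L + L) : Finset ℤ) : Set ℤ) := by
      rw [Finset.coe_Ico]; exact Set.Ico_disjoint_Ico_same
    rw [Finset.range_add_one, Finset.set_biInter_insert, Set.inter_comm,
      infinitePi_inter_eq_mul hdisj hpast (measurableSet_cyl _ _).compl, ih,
      prob_compl_eq_one_sub (cylinderEvents_le_pi _ (measurableSet_cyl _ _)), coinTosses_cyl]
    simp [signLaw_singleton, pow_succ]

/-- A walk confined to `[-K, K]` after time `N` has no run of `2K + 1` steps `+1` there, and the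
disjoint blocks of length `2K + 1` after `N` are independent. -/
lemma coinTosses_forall_ge_abs_walk_le (K : ℕ) (N : ℤ) :
    coinTosses {w | ∀ n ≥ N, |walk w n| ≤ K} = 0 := by
  set L := 2 * K + 1
  have hsub : ∀ M, {w | ∀ n ≥ N, |walk w n| ≤ K} ⊆
      ⋂ i ∈ Finset.range M, (cyl (Finset.Ico (N + i * L) (N + i * L + L)) 1)ᶜ := by
    intro M w hw
    simp only [Set.mem_iInter, Set.mem_compl_iff]
    intro i _ hblock
    have hi : (0 : ℤ) ≤ i * L := by positivity
    have hrise := walk_sub_walk w (a := N + i * L) (b := N + i * L + L) (by omega)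
    rw [Finset.sum_congr rfl hblock] at hrise
    have h1 := abs_le.1 (hw (N + i * L) (by omega))
    have h2 := abs_le.1 (hw (N + i * L + L) (by omega))
    simp only [Pi.one_apply, Finset.sum_const, Int.card_Ico, add_sub_cancel_left,
      Int.toNat_natCast, Int.nsmul_eq_mul, mul_one] at hrise
    omega
  have hlt : 1 - (2⁻¹ : ℝ≥0∞) ^ L < 1 :=
    ENNReal.sub_lt_self ENNReal.one_ne_top one_ne_zero (by simp)
  exact le_antisymm (ge_of_tendsto' (ENNReal.tendsto_pow_atTop_nhds_zero_of_lt_one hlt) fun M =>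
    (measure_mono (hsub M)).trans_eq (coinTosses_iInter_compl_blocks N L M)) bot_le

def walksBddAbove : Set (ℤ → ℤ) := {w | ∃ K, ∀ᶠ n in atTop, walk w n ≤ K}

def walksBddBelow : Set (ℤ → ℤ) := {w | ∃ K, ∀ᶠ n in atTop, K ≤ walk w n}

lemma measurableSet_walksBddAbove : MeasurableSet walksBddAbove := by
  simp only [walksBddAbove, eventually_atTop, Set.ofPred_exists, Set.ofPred_forall]
  exact .iUnion fun K => .iUnion fun N => .iInter fun n => .iInter fun _ =>
    measurableSet_le (measurable_walk n) measurable_const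

lemma shiftBy_preimage_walksBddAbove (m : ℤ) : shiftBy m ⁻¹' walksBddAbove = walksBddAbove := by
  ext w
  simp only [Set.mem_preimage, walksBddAbove, Set.mem_ofPred_eq, walk_shiftBy]
  constructor
  · rintro ⟨K, hK⟩
    refine ⟨K + walk w m, ((tendsto_atTop_add_const_right _ (-m) tendsto_id).eventually hK).mono
      fun n hn => ?_⟩
    simp only [id, neg_add_cancel_right] at hn
    linarith
  · rintro ⟨K, hK⟩
    refine ⟨K - walk w m, ((tendsto_atTop_add_const_right _ m tendsto_id).eventually hK).mono
      fun n hn => ?_⟩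
    simp only [id] at hn
    linarith

lemma neg_preimage_walksBddAbove : Neg.neg ⁻¹' walksBddAbove = walksBddBelow := by
  ext w
  simp only [Set.mem_preimage, walksBddAbove, walksBddBelow, Set.mem_ofPred_eq, walk_neg]
  constructor
  · rintro ⟨K, hK⟩; exact ⟨-K, hK.mono fun n hn => by linarith⟩
  · rintro ⟨K, hK⟩; exact ⟨-K, hK.mono fun n hn => by linarith⟩

lemma coinTosses_walksBddBelow_eq : coinTosses walksBddBelow = coinTosses walksBddAbove := by
  rw [← neg_preimage_walksBddAbove,
    measurePreserving_neg_coinTosses.measure_preimage measurableSet_walksBddAbove.nullMeasurableSet]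

lemma coinTosses_walksBddAbove : coinTosses walksBddAbove = 0 := by
  have hboth : coinTosses (walksBddAbove ∩ walksBddBelow) = 0 := by
    refine measure_mono_null ?_ (measure_iUnion_null fun K : ℕ => measure_iUnion_null fun N : ℤ =>
      coinTosses_forall_ge_abs_walk_le K N)
    rintro w ⟨⟨K₁, h₁⟩, ⟨K₂, h₂⟩⟩
    obtain ⟨N, hN⟩ := eventually_atTop.1 (h₁.and h₂)
    refine Set.mem_iUnion.2 ⟨(max K₁ (-K₂)).toNat, Set.mem_iUnion.2 ⟨N, fun n hn => ?_⟩⟩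
    have := hN n hn
    rw [abs_le]
    omega
  refine (measure_eq_zero_or_one_of_shiftBy_preimage_eq signLaw measurableSet_walksBddAbove
    fun m => shiftBy_preimage_walksBddAbove m).resolve_right fun h => ?_
  have hAc := (prob_compl_eq_zero_iff measurableSet_walksBddAbove).2 h
  rw [Set.inter_comm, measure_inter_conull hAc, coinTosses_walksBddBelow_eq, h] at hboth
  exact one_ne_zero hboth

lemma coinTosses_compl_recurrentSignSeqs : coinTosses recurrentSignSeqsᶜ = 0 := by
  have hA : ∀ᵐ w ∂coinTosses, w ∉ walksBddAbove :=
    measure_eq_zero_iff_ae_notMem.1 coinTosses_walksBddAbove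
  have hB : ∀ᵐ w ∂coinTosses, w ∉ walksBddBelow :=
    measure_eq_zero_iff_ae_notMem.1 (coinTosses_walksBddBelow_eq.trans coinTosses_walksBddAbove)
  have hS : ∀ᵐ w ∂coinTosses, w ∈ signSeqs :=
    mem_ae_iff.2 ((prob_compl_eq_zero_iff measurableSet_signSeqs).2 coinTosses_signSeqs)
  refine mem_ae_iff.1 ?_
  filter_upwards [hS, hA, hB] with w hw hA hB
  refine ⟨hw, isRecurrent_of_frequently hw (fun K => ?_) (fun K => ?_)⟩
  · by_contra h
    exact hA ⟨K, (not_frequently.1 h).mono fun n hn => (not_le.1 hn).le⟩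
  · by_contra h
    exact hB ⟨K, (not_frequently.1 h).mono fun n hn => (not_le.1 hn).le⟩

lemma measurableSet_recurrentSignSeqs : MeasurableSet recurrentSignSeqs := by
  refine measurableSet_signSeqs.inter ?_
  simp only [IsRecurrent, frequently_atTop, Set.ofPred_forall, Set.ofPred_exists, Set.ofPred_and]
  exact .iInter fun m => .iInter fun N => .iUnion fun n =>
    (MeasurableSet.const _).inter (measurableSet_eq_fun (measurable_walk n) measurable_const)

section Transfer

variable {Ω Z : Type*} [MeasurableSpace Ω] {μ : Measure Ω} {π : Ω → Z}
  {T : ℕ → Ω ≃ᵐ Ω} {O : Set Ω} {R : Set (Z × Z)} {g : Z → Z} {A : Set Z}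

def movePiece (π : Ω → Z) (T : ℕ → Ω ≃ᵐ Ω) (O : Set Ω) (g : Z → Z) (A : Set Z) (n : ℕ) :
    Set Ω :=
  O ∩ π ⁻¹' A ∩ {p | π (T n p) = g (π p)}

lemma measurableSet_movePiece [MeasurableSpace Z] [MeasurableEq Z] (hπ : Measurable π)
    (hO : MeasurableSet O) (hg : Measurable g) (hA : MeasurableSet A) (n : ℕ) :
    MeasurableSet (movePiece π T O g A n) :=
  (hO.inter (hπ hA)).inter (measurableSet_eq_fun (hπ.comp (T n).measurable) (hg.comp hπ))

lemma iUnion_disjointed_movePiece (hR : ∀ p ∈ O, ∀ x, (π p, x) ∈ R → ∃ n, π (T n p) = x)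
    (hgR : ∀ x ∈ A, (x, g x) ∈ R) :
    ⋃ n, disjointed (movePiece π T O g A) n = O ∩ π ⁻¹' A := by
  refine iUnion_disjointed.trans <| Set.Subset.antisymm
    (Set.iUnion_subset fun n => Set.inter_subset_left) fun p hp => ?_
  obtain ⟨n, hn⟩ := hR p hp.1 _ (hgR _ hp.2)
  exact Set.mem_iUnion.2 ⟨n, hp, hn⟩

lemma iUnion_image_disjointed_movePiece (hTO : ∀ n, Set.MapsTo (T n) O O)
    (hπO : Set.InjOn π O) (hR : ∀ p ∈ O, ∀ x, (π p, x) ∈ R → ∃ n, π (T n p) = x)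
    (hRsymm : ∀ x y, (x, y) ∈ R → (y, x) ∈ R) (hgR : ∀ x ∈ A, (x, g x) ∈ R) :
    ⋃ n, T n '' disjointed (movePiece π T O g A) n = O ∩ π ⁻¹' (g '' A) := by
  refine Set.Subset.antisymm (Set.iUnion_subset fun n => ?_) ?_
  · rintro _ ⟨q, hq, rfl⟩
    obtain ⟨⟨hqO, hqA⟩, hq⟩ := disjointed_subset _ n hq
    exact ⟨hTO n hqO, π q, hqA, hq.symm⟩
  · rintro p ⟨hpO, x, hxA, hx⟩
    obtain ⟨t, ht⟩ := hR p hpO x (hRsymm _ _ (hx ▸ hgR x hxA))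
    have hq : T t p ∈ O ∩ π ⁻¹' A := ⟨hTO t hpO, by rw [Set.mem_preimage, ht]; exact hxA⟩
    obtain ⟨n, hn⟩ := Set.mem_iUnion.1 (iUnion_disjointed_movePiece hR hgR ▸ hq)
    refine Set.mem_iUnion.2 ⟨n, T t p, hn, hπO (hTO n hq.1) hpO ?_⟩
    rw [(disjointed_subset _ n hn).2, ht, hx]

lemma pairwise_disjoint_image_disjointed_movePiece (hπO : Set.InjOn π O)
    (hgA : Set.InjOn g A) :
    Pairwise (Function.onFun Disjoint fun n => T n '' disjointed (movePiece π T O g A) n) := by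
  intro n m hnm
  refine Set.disjoint_left.2 ?_
  rintro _ ⟨q, hq, rfl⟩ ⟨q', hq', hqq'⟩
  obtain ⟨⟨hqO, hqA⟩, hqg⟩ := disjointed_subset _ n hq
  obtain ⟨⟨hq'O, hq'A⟩, hq'g⟩ := disjointed_subset _ m hq'
  have : q' = q := hπO hq'O hqO (hgA hq'A hqA (by rw [← hq'g, ← hqg, hqq']))
  exact Set.disjoint_left.1 (disjoint_disjointed _ hnm) hq (this ▸ hq')

theorem map_apply_image_eq [MeasurableSpace Z] [StandardBorelSpace Z] (hπ : Measurable π)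
    (hT : ∀ n, MeasurePreserving (T n) μ μ) (hO : MeasurableSet O) (hμO : μ Oᶜ = 0)
    (hTO : ∀ n, Set.MapsTo (T n) O O) (hπO : Set.InjOn π O)
    (hR : ∀ p ∈ O, ∀ x, (π p, x) ∈ R → ∃ n, π (T n p) = x)
    (hRsymm : ∀ x y, (x, y) ∈ R → (y, x) ∈ R) (hg : Measurable g) (hA : MeasurableSet A)
    (hgA : Set.InjOn g A) (hgR : ∀ x ∈ A, (x, g x) ∈ R) :
    μ.map π (g '' A) = μ.map π A := by
  have hF := measurableSet_movePiece (T := T) hπ hO hg hA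
  calc μ.map π (g '' A) = μ (O ∩ π ⁻¹' (g '' A)) := by
        rw [Measure.map_apply hπ (hA.image_of_measurable_injOn hg hgA), Set.inter_comm,
          measure_inter_conull hμO]
    _ = ∑' n, μ (disjointed (movePiece π T O g A) n) := by
        rw [← iUnion_image_disjointed_movePiece hTO hπO hR hRsymm hgR,
          measure_iUnion (pairwise_disjoint_image_disjointed_movePiece hπO hgA)
            fun n => (T n).measurableSet_image.2 (.disjointed hF n)]
        exact tsum_congr fun n => by
          rw [MeasurableEquiv.image_eq_preimage_symm, (hT n).symm.measure_preimage_equiv]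
    _ = μ.map π A := by
        rw [← measure_iUnion (disjoint_disjointed _) (.disjointed hF),
          iUnion_disjointed_movePiece hR hgR, Set.inter_comm, measure_inter_conull hμO,
          Measure.map_apply hπ hA]

end Transfer

section Kalikow

variable {B : Type*} [MeasurableSpace B]

lemma measurable_kalikowPi [Countable B] [MeasurableSingletonClass B] :
    Measurable fun p : (ℤ → ℤ) × (ℤ → B) => kalikowPi p.1 p.2 := by
  refine measurable_pi_lambda _ fun n => ((measurable_pi_apply n).comp measurable_fst).prodMk ?_
  have heval : Measurable fun q : ℤ × (ℤ → B) => q.2 q.1 :=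
    measurable_from_prod_countable_right fun k => measurable_pi_apply k
  exact heval.comp (((measurable_walk n).comp measurable_fst).prodMk measurable_snd)

def flipOnEquiv (S : Finset ℤ) : (ℤ → ℤ) ≃ᵐ (ℤ → ℤ) where
  toFun := flipOn S
  invFun := flipOn S
  left_inv := flipOn_flipOn S
  right_inv := flipOn_flipOn S
  measurable_toFun := (measurePreserving_flipOn_coinTosses S).measurable
  measurable_invFun := (measurePreserving_flipOn_coinTosses S).measurable

def kalikowMove (t : Finset ℤ × ℤ) : (ℤ → ℤ) × (ℤ → B) ≃ᵐ (ℤ → ℤ) × (ℤ → B) :=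
  (flipOnEquiv t.1).prodCongr (shiftByEquiv t.2)

lemma coe_kalikowMove (t : Finset ℤ × ℤ) :
    ⇑(kalikowMove (B := B) t) = Prod.map (flipOn t.1) (shiftBy t.2) := by
  simp [kalikowMove, MeasurableEquiv.prodCongr, flipOnEquiv, coe_shiftByEquiv]

lemma exists_kalikowMove_eq {X : Set (ℤ → B)} {p : (ℤ → ℤ) × (ℤ → B)}
    (hp : p.1 ∈ recurrentSignSeqs) {x : ℤ → ℤ × B}
    (hx : (kalikowPi p.1 p.2, x) ∈ gibbsRel1 (kalikowShift X)) :
    ∃ t, kalikowPi (kalikowMove t p).1 (kalikowMove t p).2 = x := by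
  obtain ⟨-, ⟨w', hw', y', -, rfl⟩, hfin⟩ := hx
  obtain ⟨S, c, h⟩ := exists_kalikowPi_eq_flipOn_shiftBy hp hw' hfin
  exact ⟨(S, c), by rw [coe_kalikowMove]; exact h.symm⟩

end Kalikow

lemma measurable_piecewise_id {Z : Type*} [MeasurableSpace Z] {D : Set Z} [DecidablePred (· ∈ D)]
    {g : Z → Z} (hD : MeasurableSet D) (hg : Measurable (D.domRestrict g)) :
    Measurable (D.piecewise g id) :=
  measurable_of_restrict_of_restrict_compl hD (by rwa [Set.domRestrict_piecewise])
    (by rw [Set.domRestrict_piecewise_compl]; exact measurable_subtype_coe)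

theorem kalikow_skew_bernoulli_tail_invariant_general
    {A : Type} [Fintype A]
    [MeasurableSpace A] [DiscreteMeasurableSpace A]
    (X : Set (ℤ → A))
    (ν : Measure (ℤ → A)) (hνP : IsProbabilityMeasure ν)
    (hνinv : ∀ n : ℤ, MeasurePreserving (shiftBy (A := A) n) ν ν)
    (P : Measure (ℤ → ℤ)) (hPP : IsProbabilityMeasure P)
    (hPsupp : P {w | ∀ j : ℤ, w j = 1 ∨ w j = -1} = 1)
    (hPcyl : ∀ (F : Finset ℤ) (a : ℤ → ℤ), (∀ j ∈ F, a j = 1 ∨ a j = -1) →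
      P {w | ∀ j ∈ F, w j = a j} = (1 / 2 : ENNReal) ^ F.card) :
    IsTailInvariant1 ((P.prod ν).map fun p : (ℤ → ℤ) × (ℤ → A) => kalikowPi p.1 p.2)
      (gibbsRel1 (kalikowShift X)) := by
  obtain rfl : P = coinTosses := eq_coinTosses hPsupp hPcyl
  intro D g hD hg hginj hgR A' hA'D hA'
  classical
  obtain ⟨e, he⟩ := exists_surjective_nat (Finset ℤ × ℤ)
  have hgD : Set.EqOn g (D.piecewise g id) A' := fun x hx =>
    (D.piecewise_eq_of_mem _ _ (hA'D hx)).symm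
  rw [Set.image_congr hgD]
  refine map_apply_image_eq (T := fun n => kalikowMove (e n))
    (O := Prod.fst ⁻¹' recurrentSignSeqs) measurable_kalikowPi
    (fun n => by
      rw [coe_kalikowMove]; exact (measurePreserving_flipOn_coinTosses _).prod (hνinv _))
    (measurableSet_recurrentSignSeqs.preimage measurable_fst) ?_
    (fun n p hp => by rw [coe_kalikowMove]; exact flipOn_mem_recurrentSignSeqs hp _)
    (fun p hp q hq hpq => Prod.ext_iff.2 (eq_of_kalikowPi_eq hp.2 hpq)) (fun p hp x hx => ?_)
    (fun _ _ => gibbsRel1_symm) (measurable_piecewise_id hD hg) hA' ((hginj.mono hA'D).congr hgD)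
    fun x hx => hgD hx ▸ hgR x (hA'D hx)
  · rw [← Set.preimage_compl, measurePreserving_fst.measure_preimage
      measurableSet_recurrentSignSeqs.compl.nullMeasurableSet]
    exact coinTosses_compl_recurrentSignSeqs
  · obtain ⟨t, ht⟩ := exists_kalikowMove_eq hp hx
    obtain ⟨n, rfl⟩ := he t
    exact ⟨n, ht⟩

theorem kalikow_skew_bernoulli_tail_invariant
    {A : Type} [Fintype A] [TopologicalSpace A] [DiscreteTopology A]
    [MeasurableSpace A] [DiscreteMeasurableSpace A]
    (X : Set (ℤ → A)) (hX : IsSubshift1 X)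
    (ν : Measure (ℤ → A)) (hνP : IsProbabilityMeasure ν) (hνX : ν X = 1)
    (hνinv : ∀ n : ℤ, MeasurePreserving (shiftBy (A := A) n) ν ν)
    (hνna : ∀ x : ℤ → A, ν {x} = 0)
    (P : Measure (ℤ → ℤ)) (hPP : IsProbabilityMeasure P)
    (hPsupp : P {w | ∀ j : ℤ, w j = 1 ∨ w j = -1} = 1)
    (hPcyl : ∀ (F : Finset ℤ) (a : ℤ → ℤ), (∀ j ∈ F, a j = 1 ∨ a j = -1) →
      P {w | ∀ j ∈ F, w j = a j} = (1 / 2 : ENNReal) ^ F.card) :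
    IsTailInvariant1 ((P.prod ν).map fun p : (ℤ → ℤ) × (ℤ → A) => kalikowPi p.1 p.2)
      (gibbsRel1 (kalikowShift X)) :=
  kalikow_skew_bernoulli_tail_invariant_general X ν hνP hνinv P hPP hPsupp hPcyl

end PaperStmt
end

section
/- Let X ⊆ Σ^ℤ be a subshift with topological entropy h_top(X) = log t, and let X̂ be the associated Kalikow-type subshift. Then the topological entropy of X̂ equals log((t² + 1)/t). -/
/-!
A word of length `m + 1` of `X̂` consists of a sign pattern `ε ∈ {±1}^(m+1)` and of the word of `X`
read along the walk `Φ_0, …, Φ_m` of `ε`. Since the walk moves by `±1` it sweeps an interval of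
some length `R(ε)`, and shift invariance of `X` gives `|L_{m+1}(X̂)| = ∑_ε |L_{R(ε)}(X)|`.
As `|L_n(X)|` lies between `c s^n` and `C s'^n` for `s < t < s'`, it remains to estimate
`∑_ε s^R(ε)`: from below by `∑_ε s^Φ_{m+1}(ε) = (s + 1/s)^(m+1)`, and from above through
`s^(max Φ - min Φ) ≤ ∑_{a,b} s^(Φ_b - Φ_a)`, where each `∑_ε s^(Φ_b - Φ_a)` factorises over the
steps into factors at most `s + 1/s`. Hence the entropy of `X̂` is `log (t + 1/t)`.
-/

open MeasureTheory Filter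

namespace PaperStmt

def wordCyl {A : Type*} {n : ℕ} (a : Fin n → A) : Set (ℤ → A) :=
  {x | ∀ i : Fin n, x ((i : ℕ) : ℤ) = a i}

def langWords {A : Type*} (Y : Set (ℤ → A)) (n : ℕ) : Set (Fin n → A) :=
  {a | ∃ x ∈ Y, x ∈ wordCyl a}

open Finset Real Topology Asymptotics

lemma exists_mem_Icc_eq_of_le_add_one {f : ℕ → ℤ} (hf : ∀ k, f (k + 1) ≤ f k + 1) {a b : ℕ}
    (hab : a ≤ b) {x : ℤ} (hxa : f a ≤ x) (hxb : x ≤ f b) : ∃ k ∈ Set.Icc a b, f k = x := by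
  induction b, hab using Nat.le_induction with
  | base => exact ⟨a, Set.left_mem_Icc.2 le_rfl, le_antisymm hxa hxb⟩
  | succ b hab ih =>
    by_cases hxb' : x ≤ f b
    · obtain ⟨k, hk, hkx⟩ := ih hxb'
      exact ⟨k, ⟨hk.1, hk.2.trans b.le_succ⟩, hkx⟩
    · exact ⟨b + 1, ⟨hab.trans b.le_succ, le_rfl⟩, by linarith [hf b]⟩

lemma exists_mem_uIcc_eq_of_abs_sub_le_one {f : ℕ → ℤ} (hf : ∀ k, |f (k + 1) - f k| ≤ 1)
    {a b : ℕ} {x : ℤ} (hx : x ∈ Set.uIcc (f a) (f b)) : ∃ k ∈ Set.uIcc a b, f k = x := by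
  wlog hab : a ≤ b generalizing a b
  · rw [Set.uIcc_comm] at hx ⊢
    exact this hx (le_of_not_ge hab)
  rw [Set.uIcc_of_le hab]
  rcases Set.mem_uIcc.1 hx with ⟨h₁, h₂⟩ | ⟨h₁, h₂⟩
  · exact exists_mem_Icc_eq_of_le_add_one (fun k => by linarith [(abs_le.1 (hf k)).2]) hab h₁ h₂
  · obtain ⟨k, hk, hkx⟩ := exists_mem_Icc_eq_of_le_add_one (f := fun k => -f k)
      (fun k => by linarith [(abs_le.1 (hf k)).1]) hab (neg_le_neg h₂) (neg_le_neg h₁)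
    exact ⟨k, hk, neg_inj.1 hkx⟩

def signs (n : ℕ) : Finset (Fin n → ℤ) := Fintype.piFinset fun _ => {-1, 1}

-- `finWalk ε k` is `Φ_k`, the position after `k` steps of the walk with steps `ε`.
def finWalk {n : ℕ} (ε : Fin n → ℤ) (k : ℕ) : ℤ := ∑ i : Fin n, if (i : ℕ) < k then ε i else 0

section finWalk

variable {n : ℕ} (ε : Fin n → ℤ)

@[simp]
lemma finWalk_zero : finWalk ε 0 = 0 := by simp [finWalk]

lemma finWalk_of_le {k : ℕ} (hk : n ≤ k) : finWalk ε k = ∑ i, ε i :=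
  sum_congr rfl fun i _ => if_pos (i.isLt.trans_le hk)

lemma finWalk_sub_finWalk (a b : ℕ) :
    finWalk ε b - finWalk ε a =
      ∑ i : Fin n, ((if (i : ℕ) < b then 1 else 0) - (if (i : ℕ) < a then 1 else 0)) * ε i := by
  rw [finWalk, finWalk, ← sum_sub_distrib]
  exact sum_congr rfl fun i _ => by split_ifs <;> ring

lemma abs_finWalk_succ_sub_le {ε : Fin n → ℤ} (hε : ε ∈ signs n) (k : ℕ) :
    |finWalk ε (k + 1) - finWalk ε k| ≤ 1 := by
  rw [finWalk_sub_finWalk]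
  by_cases hk : k < n
  · rw [Fintype.sum_eq_single ⟨k, hk⟩ fun i hi => by
      have : (i : ℕ) ≠ k := fun h => hi (Fin.ext h)
      split_ifs <;> omega]
    have := Fintype.mem_piFinset.1 hε ⟨k, hk⟩
    simp only [mem_insert, mem_singleton] at this
    rcases this with h | h <;> simp [h]
  · rw [sum_eq_zero fun i _ => by split_ifs <;> omega]
    simp

lemma walk_natCast (w : ℤ → ℤ) (k : ℕ) : walk w k = ∑ j ∈ range k, w j := by
  rw [walk, if_pos (Int.natCast_nonneg k), Int.Ico_eq_finset_map, sum_map]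
  simp

lemma walk_eq_finWalk {w : ℤ → ℤ} (hw : ∀ i : Fin n, w i = ε i) {k : ℕ} (hk : k ≤ n) :
    walk w k = finWalk ε k := by
  rw [walk_natCast, finWalk]
  calc ∑ j ∈ range k, w j = ∑ j ∈ range n, if j < k then w j else 0 := by
        rw [← sum_filter]
        congr 1
        ext j
        simp only [mem_range, mem_filter]
        omega
    _ = _ := by
        rw [← Fin.sum_univ_eq_sum_range (fun j => if j < k then w j else 0)]
        simp only [hw]

end finWalk

section walkRange

variable {m : ℕ} (ε : Fin (m + 1) → ℤ)

def walkMin : ℤ := (range (m + 1)).inf' nonempty_range_add_one (finWalk ε)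

def walkMax : ℤ := (range (m + 1)).sup' nonempty_range_add_one (finWalk ε)

def walkRange : ℕ := (walkMax ε - walkMin ε).toNat + 1

lemma walkMin_le_finWalk {k : ℕ} (hk : k ≤ m) : walkMin ε ≤ finWalk ε k :=
  inf'_le _ (mem_range.2 (Nat.lt_succ_of_le hk))

lemma finWalk_le_walkMax {k : ℕ} (hk : k ≤ m) : finWalk ε k ≤ walkMax ε :=
  le_sup' (finWalk ε) (mem_range.2 (Nat.lt_succ_of_le hk))

lemma walkMin_le_zero : walkMin ε ≤ 0 := by
  simpa using walkMin_le_finWalk ε (Nat.zero_le m)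

lemma zero_le_walkMax : 0 ≤ walkMax ε := by
  simpa using finWalk_le_walkMax ε (Nat.zero_le m)

lemma natCast_walkRange : (walkRange ε : ℤ) = walkMax ε - walkMin ε + 1 := by
  have := walkMin_le_zero ε
  have := zero_le_walkMax ε
  rw [walkRange]
  omega

lemma exists_finWalk_eq {ε : Fin (m + 1) → ℤ} (hε : ε ∈ signs (m + 1)) {x : ℤ}
    (hx₁ : walkMin ε ≤ x) (hx₂ : x ≤ walkMax ε) : ∃ k : Fin (m + 1), finWalk ε k = x := by
  obtain ⟨a, ha, hmin⟩ : ∃ a ∈ range (m + 1), walkMin ε = finWalk ε a :=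
    exists_mem_eq_inf' _ _
  obtain ⟨b, hb, hmax⟩ : ∃ b ∈ range (m + 1), walkMax ε = finWalk ε b :=
    exists_mem_eq_sup' _ _
  obtain ⟨k, hk, hkx⟩ := exists_mem_uIcc_eq_of_abs_sub_le_one (abs_finWalk_succ_sub_le hε)
    (Set.mem_uIcc_of_le (a := finWalk ε a) (b := finWalk ε b) (hmin ▸ hx₁) (hmax ▸ hx₂))
  have : k ≤ max a b := hk.2
  exact ⟨⟨k, by simp only [mem_range] at ha hb; omega⟩, hkx⟩

end walkRange

lemma zpow_sum_eq_prod {ι : Type*} {s : ℝ} (hs : s ≠ 0) (t : Finset ι) (f : ι → ℤ) :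
    s ^ (∑ i ∈ t, f i) = ∏ i ∈ t, s ^ f i := by
  classical
  induction t using Finset.induction_on with
  | empty => simp
  | insert a t ha ih => rw [sum_insert ha, prod_insert ha, zpow_add₀ hs, ih]

lemma sum_signs_zpow {n : ℕ} {s : ℝ} (hs : s ≠ 0) (e : Fin n → ℤ) :
    ∑ ε ∈ signs n, s ^ (∑ i, e i * ε i) = ∏ i, (s ^ e i + s ^ (-e i)) := by
  rw [signs]
  conv_lhs => enter [2, ε]; rw [zpow_sum_eq_prod hs]
  rw [← prod_univ_sum (fun _ => {-1, 1}) fun i σ => s ^ (e i * σ)]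
  refine prod_congr rfl fun i _ => ?_
  rw [sum_pair (by norm_num), add_comm]
  simp

lemma two_le_add_inv {s : ℝ} (hs : 0 < s) : 2 ≤ s + s⁻¹ := by
  have : 0 ≤ (s - 1) ^ 2 / s := by positivity
  have h : (s - 1) ^ 2 / s = s + s⁻¹ - 2 := by field_simp; ring
  linarith

lemma sum_signs_zpow_finWalk_sub_le {n : ℕ} {s : ℝ} (hs : 0 < s) (a b : ℕ) :
    ∑ ε ∈ signs n, s ^ (finWalk ε b - finWalk ε a) ≤ (s + s⁻¹) ^ n := by
  simp_rw [finWalk_sub_finWalk, sum_signs_zpow hs.ne']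
  calc ∏ i : Fin n, _ ≤ ∏ _i : Fin n, (s + s⁻¹) := by
        refine prod_le_prod (fun i _ => by positivity) fun i _ => ?_
        split_ifs <;> simp [add_comm] <;> linarith [two_le_add_inv hs]
    _ = (s + s⁻¹) ^ n := by simp

lemma le_sum_signs_pow_walkRange {m : ℕ} {s : ℝ} (hs : 1 ≤ s) :
    (s + s⁻¹) ^ (m + 1) ≤ ∑ ε ∈ signs (m + 1), s ^ walkRange ε := by
  have key := sum_signs_zpow (n := m + 1) (s := s) (by positivity) 1
  simp only [Pi.one_apply, one_mul, zpow_one, zpow_neg, prod_const, card_univ,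
    Fintype.card_fin] at key
  rw [← key]
  refine sum_le_sum fun ε hε => ?_
  rw [← zpow_natCast, natCast_walkRange, ← finWalk_of_le ε le_rfl]
  refine zpow_le_zpow_right₀ hs ?_
  have := (abs_le.1 (abs_finWalk_succ_sub_le hε m)).2
  linarith [finWalk_le_walkMax ε le_rfl, walkMin_le_zero ε]

lemma sum_signs_pow_walkRange_le {m : ℕ} {s : ℝ} (hs : 1 ≤ s) :
    ∑ ε ∈ signs (m + 1), s ^ walkRange ε ≤ s * (m + 1) ^ 2 * (s + s⁻¹) ^ (m + 1) := by
  have hs₀ : 0 < s := by linarith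
  have hpair : ∀ ε : Fin (m + 1) → ℤ, s ^ walkRange ε ≤
      s * ∑ a ∈ range (m + 1), ∑ b ∈ range (m + 1), s ^ (finWalk ε b - finWalk ε a) := by
    intro ε
    obtain ⟨a, ha, hmin⟩ : ∃ a ∈ range (m + 1), walkMin ε = finWalk ε a :=
      exists_mem_eq_inf' _ _
    obtain ⟨b, hb, hmax⟩ : ∃ b ∈ range (m + 1), walkMax ε = finWalk ε b :=
      exists_mem_eq_sup' _ _
    rw [← zpow_natCast, natCast_walkRange, zpow_add_one₀ hs₀.ne', mul_comm, hmin, hmax]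
    gcongr
    refine (single_le_sum (f := fun b => s ^ (finWalk ε b - finWalk ε a))
      (fun b _ => by positivity) hb).trans ?_
    exact single_le_sum (f := fun a => ∑ b ∈ range (m + 1), s ^ (finWalk ε b - finWalk ε a))
      (fun a _ => sum_nonneg fun b _ => by positivity) ha
  calc ∑ ε ∈ signs (m + 1), s ^ walkRange ε
      ≤ ∑ ε ∈ signs (m + 1), s * ∑ a ∈ range (m + 1), ∑ b ∈ range (m + 1),
          s ^ (finWalk ε b - finWalk ε a) := sum_le_sum fun ε _ => hpair ε
    _ = s * ∑ a ∈ range (m + 1), ∑ b ∈ range (m + 1), ∑ ε ∈ signs (m + 1),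
          s ^ (finWalk ε b - finWalk ε a) := by
        rw [← mul_sum, sum_comm]
        simp_rw [sum_comm (s := signs (m + 1))]
    _ ≤ s * ∑ _a ∈ range (m + 1), ∑ _b ∈ range (m + 1), (s + s⁻¹) ^ (m + 1) := by
        gcongr with a _ b _
        exact sum_signs_zpow_finWalk_sub_le hs₀ a b
    _ = s * (m + 1) ^ 2 * (s + s⁻¹) ^ (m + 1) := by
        simp only [sum_const, card_range, nsmul_eq_mul]
        push_cast
        ring

lemma ncard_image_eq_of_factors {α β γ : Type*} {f : α → β} {g : α → γ} {s : Set α}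
    (hg : (g '' s).Finite) (F : γ → β) (G : β → γ) (hfg : ∀ x ∈ s, f x = F (g x))
    (hgf : ∀ x ∈ s, g x = G (f x)) : (f '' s).ncard = (g '' s).ncard := by
  have hf_eq : f '' s = F '' (g '' s) := by rw [Set.image_image]; exact Set.image_congr hfg
  have hg_eq : g '' s = G '' (f '' s) := by rw [Set.image_image]; exact Set.image_congr hgf
  have hf : (f '' s).Finite := hf_eq ▸ hg.image F
  refine le_antisymm ?_ ?_
  · rw [hf_eq]; exact Set.ncard_image_le hg
  · conv_lhs => rw [hg_eq]
    exact Set.ncard_image_le hf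

section Languages

variable {A : Type*}

lemma langWords_eq_image (Y : Set (ℤ → A)) (n : ℕ) :
    langWords Y n = (fun y (i : Fin n) => y i) '' Y := by
  ext a
  simp only [langWords, wordCyl, Set.mem_ofPred_eq, Set.mem_image, funext_iff]

lemma langWords_nonempty {Y : Set (ℤ → A)} (hY : Y.Nonempty) (n : ℕ) :
    (langWords Y n).Nonempty := by
  rw [langWords_eq_image]
  exact hY.image _

lemma image_shiftBy {X : Set (ℤ → A)} (hX : ∀ n : ℤ, ∀ x ∈ X, shiftBy n x ∈ X) (p : ℤ) :
    shiftBy p '' X = X := by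
  refine (Set.image_subset_iff.2 fun x hx => hX p x hx).antisymm fun x hx =>
    ⟨shiftBy (-p) x, hX (-p) x hx, ?_⟩
  funext k
  simp [shiftBy]

lemma langWords_eq_image_shift {X : Set (ℤ → A)} (hX : ∀ n : ℤ, ∀ x ∈ X, shiftBy n x ∈ X)
    (p : ℤ) (r : ℕ) : langWords X r = (fun y (j : Fin r) => y (p + j)) '' X := by
  conv_lhs => rw [langWords_eq_image, ← image_shiftBy hX p, Set.image_image]
  simp only [shiftBy, add_comm]

def kalikowWord {n : ℕ} (ε : Fin n → ℤ) (y : ℤ → A) : Fin n → ℤ × A :=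
  fun i => (ε i, y (finWalk ε i))

lemma langWords_kalikowShift (X : Set (ℤ → A)) (n : ℕ) :
    langWords (kalikowShift X) n = ⋃ ε ∈ (signs n : Set (Fin n → ℤ)), kalikowWord ε '' X := by
  ext z
  simp only [Set.mem_iUnion, Set.mem_image, exists_prop, mem_coe]
  constructor
  · rintro ⟨_, ⟨w, hw, y, hy, rfl⟩, hz⟩
    refine ⟨fun i => w i, Fintype.mem_piFinset.2 fun i => ?_, y, hy, funext fun i => ?_⟩
    · rcases hw i with h | h <;> simp [h]
    · rw [← hz i]
      simp [kalikowWord, kalikowPi, walk_eq_finWalk (fun i : Fin n => w i) (fun _ => rfl) i.isLt.le]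
  · rintro ⟨ε, hε, y, hy, rfl⟩
    set w : ℤ → ℤ := fun j => if h : j.toNat < n then ε ⟨j.toNat, h⟩ else 1
    have hwε : ∀ i : Fin n, w i = ε i := fun i => by simp [w]
    refine ⟨kalikowPi w y, ⟨w, fun j => ?_, y, hy, rfl⟩, fun i => ?_⟩
    · by_cases h : j.toNat < n
      · have := Fintype.mem_piFinset.1 hε ⟨j.toNat, h⟩
        simp only [mem_insert, mem_singleton] at this
        simp only [w, dif_pos h]
        tauto
      · simp [w, h]
    · simp [kalikowPi, kalikowWord, hwε, walk_eq_finWalk ε hwε i.isLt.le]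

lemma kalikowShift_nonempty {X : Set (ℤ → A)} (hX : X.Nonempty) : (kalikowShift X).Nonempty :=
  let ⟨y, hy⟩ := hX
  ⟨_, fun _ => 1, fun _ => Or.inl rfl, y, hy, rfl⟩

lemma finite_image_kalikowWord [Finite A] {n : ℕ} (ε : Fin n → ℤ) (X : Set (ℤ → A)) :
    (kalikowWord ε '' X).Finite :=
  (Set.finite_range fun u : Fin n → A => fun i => (ε i, u i)).subset <| by
    rintro _ ⟨y, -, rfl⟩
    exact ⟨fun i => y (finWalk ε i), rfl⟩

lemma finite_langWords_kalikowShift [Finite A] (X : Set (ℤ → A)) (n : ℕ) :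
    (langWords (kalikowShift X) n).Finite := by
  rw [langWords_kalikowShift]
  exact (finite_toSet _).biUnion fun ε _ => finite_image_kalikowWord ε X

lemma ncard_image_kalikowWord [Finite A] {X : Set (ℤ → A)}
    (hX : ∀ n : ℤ, ∀ x ∈ X, shiftBy n x ∈ X) {m : ℕ} {ε : Fin (m + 1) → ℤ}
    (hε : ε ∈ signs (m + 1)) : (kalikowWord ε '' X).ncard = (langWords X (walkRange ε)).ncard := by
  -- A Kalikow word reads `y` only on `[walkMin ε, walkMax ε]`, and the walk visits every site
  -- there, so it determines and is determined by the block of `y` on that interval.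
  have hsite : ∀ i : Fin (m + 1), (finWalk ε i - walkMin ε).toNat < walkRange ε := fun i => by
    have := walkMin_le_finWalk ε (Nat.le_of_lt_succ i.isLt)
    have := finWalk_le_walkMax ε (Nat.le_of_lt_succ i.isLt)
    have := natCast_walkRange ε
    omega
  have htime : ∀ j : Fin (walkRange ε), ∃ k : Fin (m + 1), finWalk ε k = walkMin ε + j :=
    fun j => exists_finWalk_eq hε (by omega) (by have := natCast_walkRange ε; omega)
  choose time htime using htime
  rw [langWords_eq_image_shift hX (walkMin ε)]
  refine ncard_image_eq_of_factors (Set.toFinite _)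
    (fun u i => (ε i, u ⟨_, hsite i⟩)) (fun z j => (z (time j)).2) (fun y _ => ?_) (fun y _ => ?_)
  · funext i
    simp only [kalikowWord, Prod.mk.injEq, true_and]
    congr 1
    have := walkMin_le_finWalk ε (Nat.le_of_lt_succ i.isLt)
    omega
  · funext j
    simp [kalikowWord, htime]

theorem ncard_langWords_kalikowShift [Finite A] {X : Set (ℤ → A)}
    (hX : ∀ n : ℤ, ∀ x ∈ X, shiftBy n x ∈ X) (m : ℕ) :
    (langWords (kalikowShift X) (m + 1)).ncard =
      ∑ ε ∈ signs (m + 1), (langWords X (walkRange ε)).ncard := by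
  rw [langWords_kalikowShift, Set.Finite.ncard_biUnion (finite_toSet _)
    (fun ε _ => finite_image_kalikowWord ε X), finsum_mem_coe_finset]
  · exact sum_congr rfl fun ε hε => ncard_image_kalikowWord hX hε
  · intro ε _ ε' _ hne
    refine Set.disjoint_left.2 ?_
    rintro _ ⟨y, -, rfl⟩ ⟨y', -, h⟩
    exact hne (funext fun i => (congrArg Prod.fst (congrFun h i)).symm)

end Languages

section Growth

variable {A : Type*} [Finite A] {X : Set (ℤ → A)}

lemma ncard_langWords_kalikowShift_le (hX : ∀ n : ℤ, ∀ x ∈ X, shiftBy n x ∈ X) {s C : ℝ}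
    (hs : 1 ≤ s) (hC : ∀ n, ((langWords X n).ncard : ℝ) ≤ C * s ^ n) (m : ℕ) :
    ((langWords (kalikowShift X) (m + 1)).ncard : ℝ) ≤
      C * s * (m + 1) ^ 2 * (s + s⁻¹) ^ (m + 1) := by
  have hC₀ : 0 ≤ C := by simpa using (Nat.cast_nonneg _).trans (hC 0)
  rw [ncard_langWords_kalikowShift hX, Nat.cast_sum]
  calc ∑ ε ∈ signs (m + 1), ((langWords X (walkRange ε)).ncard : ℝ)
      ≤ C * ∑ ε ∈ signs (m + 1), s ^ walkRange ε := by
        rw [mul_sum]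
        exact sum_le_sum fun ε _ => hC _
    _ ≤ C * (s * (m + 1) ^ 2 * (s + s⁻¹) ^ (m + 1)) := by
        gcongr
        exact sum_signs_pow_walkRange_le hs
    _ = C * s * (m + 1) ^ 2 * (s + s⁻¹) ^ (m + 1) := by ring

lemma le_ncard_langWords_kalikowShift (hX : ∀ n : ℤ, ∀ x ∈ X, shiftBy n x ∈ X) {s c : ℝ}
    (hs : 1 ≤ s) (hc₀ : 0 ≤ c) (hc : ∀ n, c * s ^ n ≤ (langWords X n).ncard) (m : ℕ) :
    c * (s + s⁻¹) ^ (m + 1) ≤ (langWords (kalikowShift X) (m + 1)).ncard := by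
  rw [ncard_langWords_kalikowShift hX, Nat.cast_sum]
  calc c * (s + s⁻¹) ^ (m + 1) ≤ c * ∑ ε ∈ signs (m + 1), s ^ walkRange ε := by
        gcongr
        exact le_sum_signs_pow_walkRange hs
    _ ≤ ∑ ε ∈ signs (m + 1), ((langWords X (walkRange ε)).ncard : ℝ) := by
        rw [mul_sum]
        exact sum_le_sum fun ε _ => hc _

end Growth

lemma exists_pos_forall_le_mul_of_eventually_le {u v : ℕ → ℝ} (hu : ∀ n, 0 ≤ u n)
    (hv : ∀ n, 0 < v n) (h : ∀ᶠ n in atTop, u n ≤ v n) : ∃ C > 0, ∀ n, u n ≤ C * v n := by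
  have huv : u =O[cofinite] v := by
    rw [Nat.cofinite_eq_atTop]
    refine IsBigO.of_bound 1 (h.mono fun n hn => ?_)
    rwa [norm_of_nonneg (hu n), norm_of_nonneg (hv n).le, one_mul]
  obtain ⟨C, hC, hb⟩ := bound_of_isBigO_cofinite huv
  refine ⟨C, hC, fun n => ?_⟩
  simpa [norm_of_nonneg (hu n), norm_of_nonneg (hv n).le] using hb (hv n).ne'

lemma exists_forall_le_mul_pow_of_tendsto {a : ℕ → ℝ} {t s : ℝ} (ha : ∀ n, 0 < a n)
    (h : Tendsto (fun n : ℕ => log (a n) / n) atTop (𝓝 (log t))) (ht : 0 < t) (hts : t < s) :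
    ∃ C > 0, ∀ n, a n ≤ C * s ^ n := by
  have hs : 0 < s := ht.trans hts
  refine exists_pos_forall_le_mul_of_eventually_le (fun n => (ha n).le) (fun n => pow_pos hs n) ?_
  filter_upwards [h.eventually (gt_mem_nhds (log_lt_log ht hts)), eventually_gt_atTop 0]
    with n hn hn₀
  rw [div_lt_iff₀ (by positivity)] at hn
  have : log (a n) < log (s ^ n) := by rw [log_pow]; linarith
  exact ((log_lt_log_iff (ha n) (pow_pos hs n)).1 this).le

lemma exists_forall_mul_pow_le_of_tendsto {a : ℕ → ℝ} {t s : ℝ} (ha : ∀ n, 1 ≤ a n)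
    (h : Tendsto (fun n : ℕ => log (a n) / n) atTop (𝓝 (log t))) (hst : s < t) :
    ∃ c > 0, ∀ n, c * max s 1 ^ n ≤ a n := by
  rcases le_or_gt s 1 with hs | hs
  · exact ⟨1, one_pos, fun n => by simpa [max_eq_right hs] using ha n⟩
  obtain ⟨C, hC, hb⟩ := exists_pos_forall_le_mul_of_eventually_le (u := fun n => s ^ n)
    (fun n => by positivity) (fun n => one_pos.trans_le (ha n)) <| by
      filter_upwards [h.eventually (lt_mem_nhds (log_lt_log (by linarith) hst)),
        eventually_gt_atTop 0] with n hn hn₀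
      rw [lt_div_iff₀ (by positivity)] at hn
      have : log (s ^ n) < log (a n) := by rw [log_pow]; linarith
      exact ((log_lt_log_iff (by positivity) (one_pos.trans_le (ha n))).1 this).le
  refine ⟨C⁻¹, inv_pos.2 hC, fun n => ?_⟩
  rw [max_eq_left hs.le, inv_mul_le_iff₀ hC]
  exact hb n

lemma tendsto_log_mul_pow_mul_pow_div {C r : ℝ} (hC : 0 < C) (hr : 0 < r) (p : ℕ) :
    Tendsto (fun n : ℕ => log (C * n ^ p * r ^ n) / n) atTop (𝓝 (log r)) := by
  have hlog : Tendsto (fun n : ℕ => log n / n) atTop (𝓝 0) := by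
    simpa [Function.comp_def] using (tendsto_pow_log_div_mul_add_atTop 1 0 1 one_ne_zero).comp
      tendsto_natCast_atTop_atTop
  have hsum := ((tendsto_const_div_atTop_nhds_zero_nat (log C)).add (hlog.const_mul (p : ℝ))).add
    (tendsto_const_nhds (x := log r))
  rw [mul_zero, add_zero, zero_add] at hsum
  refine hsum.congr' ((eventually_gt_atTop 0).mono fun n hn => ?_)
  have : (n : ℝ) ≠ 0 := by positivity
  dsimp only
  rw [log_mul (by positivity) (by positivity), log_mul (by positivity) (by positivity), log_pow,
    log_pow]
  field_simp

lemma tendsto_log_div_of_bounds {u : ℕ → ℝ} {L : ℝ} (hu : ∀ n, 0 < u n)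
    (hlower : ∀ x < L, ∃ c > 0, ∃ r > 0, x < log r ∧ ∀ᶠ n in atTop, c * r ^ n ≤ u n)
    (hupper : ∀ x > L, ∃ C > 0, ∃ r > 0, log r < x ∧ ∀ᶠ n in atTop, u n ≤ C * n ^ 2 * r ^ n) :
    Tendsto (fun n : ℕ => log (u n) / n) atTop (𝓝 L) := by
  refine tendsto_order.2 ⟨fun x hx => ?_, fun x hx => ?_⟩
  · obtain ⟨c, hc, r, hr, hxr, hb⟩ := hlower x hx
    filter_upwards [(tendsto_log_mul_pow_mul_pow_div hc hr 0).eventually (lt_mem_nhds hxr), hb]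
      with n h₁ h₂
    refine h₁.trans_le (div_le_div_of_nonneg_right (log_le_log (by positivity) ?_) n.cast_nonneg)
    simpa using h₂
  · obtain ⟨C, hC, r, hr, hrx, hb⟩ := hupper x hx
    filter_upwards [(tendsto_log_mul_pow_mul_pow_div hC hr 2).eventually (gt_mem_nhds hrx), hb]
      with n h₁ h₂
    exact (div_le_div_of_nonneg_right (log_le_log (hu n) h₂) n.cast_nonneg).trans_lt h₁

lemma exists_gt_log_add_inv_lt {t x : ℝ} (ht : 0 < t) (hx : log (t + t⁻¹) < x) :
    ∃ s > t, log (s + s⁻¹) < x := by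
  have hcont : ContinuousAt (fun s => log (s + s⁻¹)) t :=
    (continuousAt_id.add (continuousAt_inv₀ ht.ne')).log (add_pos ht (inv_pos.2 ht)).ne'
  obtain ⟨s, hsx, hts⟩ := ((hcont.eventually (gt_mem_nhds hx)).filter_mono nhdsWithin_le_nhds
    |>.and (self_mem_nhdsWithin (s := Set.Ioi t))).exists
  exact ⟨s, hts, hsx⟩

-- The lower estimate needs a base `≥ 1`, and `t` may be `1`.
lemma exists_lt_lt_log_max_add_inv {t x : ℝ} (ht : 1 ≤ t) (hx : x < log (t + t⁻¹)) :
    ∃ s < t, x < log (max s 1 + (max s 1)⁻¹) := by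
  have hcont : ContinuousAt (fun s => log (max s 1 + (max s 1)⁻¹)) t := by
    have hmax : ContinuousAt (fun s : ℝ => max s 1) t := continuousAt_id.max continuousAt_const
    have hpos : 0 < max t 1 := lt_max_of_lt_right one_pos
    exact (hmax.add (hmax.inv₀ hpos.ne')).log (add_pos hpos (inv_pos.2 hpos)).ne'
  rw [← max_eq_left ht] at hx
  obtain ⟨s, hxs, hst⟩ := ((hcont.eventually (lt_mem_nhds hx)).filter_mono nhdsWithin_le_nhds
    |>.and (self_mem_nhdsWithin (s := Set.Iio t))).exists
  exact ⟨s, hst, hxs⟩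

theorem kalikow_topological_entropy_general
    {A : Type} [Fintype A] [TopologicalSpace A]
    (X : Set (ℤ → A)) (hX : IsSubshift1 X) (t : ℝ) (ht : 0 < t)
    (hent : Filter.Tendsto (fun n : ℕ => Real.log ((langWords X n).ncard) / n)
      Filter.atTop (nhds (Real.log t))) :
    Filter.Tendsto (fun n : ℕ => Real.log ((langWords (kalikowShift X) n).ncard) / n)
      Filter.atTop (nhds (Real.log ((t ^ 2 + 1) / t))) := by
  obtain ⟨hne, -, hshift⟩ := hX
  have ha : ∀ n, (1 : ℝ) ≤ (langWords X n).ncard := fun n => by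
    exact_mod_cast (Set.ncard_pos (Set.toFinite _)).2 (langWords_nonempty hne n)
  have hb : ∀ n, (0 : ℝ) < (langWords (kalikowShift X) n).ncard := fun n => by
    exact_mod_cast (Set.ncard_pos (finite_langWords_kalikowShift X n)).2
      (langWords_nonempty (kalikowShift_nonempty hne) n)
  have ht₁ : 1 ≤ t := (log_nonneg_iff ht).1 <| ge_of_tendsto' hent fun n =>
    div_nonneg (log_nonneg (ha n)) n.cast_nonneg
  rw [show (t ^ 2 + 1) / t = t + t⁻¹ by field_simp]
  refine tendsto_log_div_of_bounds hb (fun x hx => ?_) (fun x hx => ?_)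
  · obtain ⟨s, hst, hxs⟩ := exists_lt_lt_log_max_add_inv ht₁ hx
    obtain ⟨c, hc, hcs⟩ := exists_forall_mul_pow_le_of_tendsto ha hent hst
    have hs₁ : 1 ≤ max s 1 := le_max_right s 1
    refine ⟨c, hc, _, by positivity, hxs, eventually_atTop.2 ⟨1, fun n hn => ?_⟩⟩
    obtain ⟨m, rfl⟩ := Nat.exists_eq_add_of_le' hn
    exact le_ncard_langWords_kalikowShift hshift hs₁ hc.le hcs m
  · obtain ⟨s, hts, hsx⟩ := exists_gt_log_add_inv_lt ht hx
    obtain ⟨C, hC, hCs⟩ :=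
      exists_forall_le_mul_pow_of_tendsto (fun n => one_pos.trans_le (ha n)) hent ht hts
    have hs₀ : 0 < s := ht.trans hts
    refine ⟨C * s, by positivity, _, by positivity, hsx, eventually_atTop.2 ⟨1, fun n hn => ?_⟩⟩
    obtain ⟨m, rfl⟩ := Nat.exists_eq_add_of_le' hn
    simpa using ncard_langWords_kalikowShift_le hshift (by linarith) hCs m

theorem kalikow_topological_entropy
    {A : Type} [Fintype A] [TopologicalSpace A] [DiscreteTopology A]
    (X : Set (ℤ → A)) (hX : IsSubshift1 X) (t : ℝ) (ht : 0 < t)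
    (hent : Filter.Tendsto (fun n : ℕ => Real.log ((langWords X n).ncard) / n)
      Filter.atTop (nhds (Real.log t))) :
    Filter.Tendsto (fun n : ℕ => Real.log ((langWords (kalikowShift X) n).ncard) / n)
      Filter.atTop (nhds (Real.log ((t ^ 2 + 1) / t))) :=
  kalikow_topological_entropy_general X hX t ht hent

end PaperStmt
end
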